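/- arXiv:1910.04648 — 9 statements merged into one kernel-verified Lean document; each statement's English description precedes it below -/
import Mathlib

section
/- Every laminar coalition structure is contiguous: if C is a laminar family of nonempty subsets of a finite set N, then there exists a linear ordering (enumeration) of N such that every coalition c ∈ C consists of consecutive elements in that ordering. -/
open Finset

theorem laminar_aux {α : Type*} [DecidableEq α] :
    ∀ (n : ℕ) (N : Finset α), N.card ≤ n → ∀ C : Set (Finset α),
      (∀ c ∈ C, c.Nonempty ∧ c ⊆ N) →
      (∀ c1 ∈ C, ∀ c2 ∈ C, (c1 ∩ c2).Nonempty → c1 ⊆ c2 ∨ c2 ⊆ c1) →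
      ∃ σ : Fin N.card → α, Function.Injective σ ∧ (∀ k, σ k ∈ N) ∧
        ∀ c ∈ C, ∃ s t : Fin N.card, ∀ k, σ k ∈ c ↔ (s ≤ k ∧ k ≤ t) := by
  intro n
  induction n with
  | zero =>
    intro N hN C hC hlam
    have h0 : N.card = 0 := Nat.le_zero.mp hN
    have hNe : N = ∅ := card_eq_zero.mp h0
    refine ⟨fun k => absurd k.isLt (by omega), ?_, ?_, ?_⟩
    · intro a b _; exact absurd a.isLt (by omega)
    · intro k; exact absurd k.isLt (by omega)
    · intro c hc
      obtain ⟨⟨x, hx⟩, hsub⟩ := hC c hc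
      have := hsub hx
      simp [hNe] at this
  | succ n IH =>
    intro N hN C hC hlam
    classical
    by_cases hC' : ∃ c ∈ C, c ≠ N
    · obtain ⟨c0, hc0C, hc0N⟩ := hC'
      -- pick a maximal coalition M ≠ N
      have hc0T : c0 ∈ N.powerset.filter (fun c => c ∈ C ∧ c ≠ N) := by
        simp only [mem_filter, mem_powerset]
        exact ⟨(hC c0 hc0C).2, hc0C, hc0N⟩
      obtain ⟨M, hMT, hMmax⟩ :=
        (N.powerset.filter (fun c => c ∈ C ∧ c ≠ N)).exists_max_image Finset.card ⟨c0, hc0T⟩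
      simp only [mem_filter, mem_powerset] at hMT
      obtain ⟨hMsub, hMC, hMN⟩ := hMT
      have hMne : M.Nonempty := (hC M hMC).1
      have hMss : M ⊂ N := Finset.ssubset_iff_subset_ne.mpr ⟨hMsub, hMN⟩
      have hcard : (N \ M).card + M.card = N.card := card_sdiff_add_card_eq_card hMsub
      have hMlt : M.card < N.card := card_lt_card hMss
      have hMpos : 0 < M.card := card_pos.mpr hMne
      have hPlt : (N \ M).card < N.card := by omega
      -- trichotomy
      have tri : ∀ c ∈ C, c ⊆ M ∨ c ⊆ N \ M ∨ c = N := by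
        intro c hc
        by_cases hd : (c ∩ M).Nonempty
        · rcases hlam c hc M hMC hd with h | h
          · exact Or.inl h
          · by_cases hcN : c = N
            · exact Or.inr (Or.inr hcN)
            · have hcT : c ∈ N.powerset.filter (fun c => c ∈ C ∧ c ≠ N) := by
                simp only [mem_filter, mem_powerset]
                exact ⟨(hC c hc).2, hc, hcN⟩
              have hle := hMmax c hcT
              have heq : M = c := eq_of_subset_of_card_le h hle
              exact Or.inl (by rw [← heq])
        · refine Or.inr (Or.inl ?_)
          intro x hx
          rw [mem_sdiff]
          exact ⟨(hC c hc).2 hx, fun hxM => hd ⟨x, mem_inter.mpr ⟨hx, hxM⟩⟩⟩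
      -- recursive calls
      obtain ⟨σ₁, hσ₁inj, hσ₁mem, hσ₁int⟩ :=
        IH M (by omega) {c ∈ C | c ⊆ M}
          (fun c hc => ⟨(hC c hc.1).1, hc.2⟩)
          (fun c1 h1 c2 h2 hne => hlam c1 h1.1 c2 h2.1 hne)
      obtain ⟨σ₂, hσ₂inj, hσ₂mem, hσ₂int⟩ :=
        IH (N \ M) (by omega) {c ∈ C | c ⊆ N \ M}
          (fun c hc => ⟨(hC c hc.1).1, hc.2⟩)
          (fun c1 h1 c2 h2 hne => hlam c1 h1.1 c2 h2.1 hne)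
      have hr : ∀ k : Fin N.card, ¬((k : ℕ) < M.card) → (k : ℕ) - M.card < (N \ M).card := by
        intro k h
        have := k.isLt
        omega
      set σ : Fin N.card → α := fun k =>
        if h : (k : ℕ) < M.card then σ₁ ⟨k, h⟩ else σ₂ ⟨(k : ℕ) - M.card, hr k h⟩ with hσ
      have hdisj : ∀ x, x ∈ M → x ∈ N \ M → False := by
        intro x hxM hxP
        rw [mem_sdiff] at hxP
        exact hxP.2 hxM
      have hσmem : ∀ k, σ k ∈ N := by
        intro k
        rw [hσ]
        by_cases h : (k : ℕ) < M.card
        · simp only [dif_pos h]; exact hMsub (hσ₁mem _)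
        · simp only [dif_neg h]
          have h2 := hσ₂mem ⟨(k : ℕ) - M.card, hr k h⟩
          rw [mem_sdiff] at h2
          exact h2.1
      refine ⟨σ, ?_, hσmem, ?_⟩
      · intro a b hab
        rw [hσ] at hab
        by_cases ha : (a : ℕ) < M.card <;> by_cases hb : (b : ℕ) < M.card
        · simp only [dif_pos ha, dif_pos hb] at hab
          exact Fin.ext (by simpa using congrArg Fin.val (hσ₁inj hab))
        · simp only [dif_pos ha, dif_neg hb] at hab
          exact absurd (hab ▸ hσ₁mem ⟨a, ha⟩) (fun h => hdisj _ h (hσ₂mem _))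
        · simp only [dif_neg ha, dif_pos hb] at hab
          exact absurd (hab ▸ hσ₂mem ⟨(a:ℕ) - M.card, hr a ha⟩)
            (fun h => hdisj _ (hσ₁mem _) h)
        · simp only [dif_neg ha, dif_neg hb] at hab
          have := congrArg Fin.val (hσ₂inj hab)
          simp only at this
          exact Fin.ext (by omega)
      · intro c hc
        rcases tri c hc with h | h | h
        · -- c ⊆ M
          obtain ⟨s, t, hst⟩ := hσ₁int c ⟨hc, h⟩
          refine ⟨⟨s, by omega⟩, ⟨t, by omega⟩, ?_⟩
          intro k
          rw [hσ]
          by_cases hk : (k : ℕ) < M.card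
          · simp only [dif_pos hk]
            have h2 := hst ⟨k, hk⟩
            simp only [Fin.le_def] at h2 ⊢
            exact h2
          · simp only [dif_neg hk]
            constructor
            · intro hmem
              exact absurd (h hmem) (fun hM => hdisj _ hM (hσ₂mem _))
            · intro ⟨h1, h2⟩
              simp only [Fin.le_def] at h1 h2
              have := t.isLt
              omega
        · -- c ⊆ N \ M
          obtain ⟨s, t, hst⟩ := hσ₂int c ⟨hc, h⟩
          have hs := s.isLt
          have ht := t.isLt
          refine ⟨⟨M.card + s, by omega⟩, ⟨M.card + t, by omega⟩, ?_⟩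
          intro k
          rw [hσ]
          by_cases hk : (k : ℕ) < M.card
          · simp only [dif_pos hk]
            constructor
            · intro hmem
              exact absurd (h hmem) (fun hPm => hdisj _ (hσ₁mem _) hPm)
            · intro ⟨h1, h2⟩
              simp only [Fin.le_def] at h1 h2
              omega
          · simp only [dif_neg hk]
            have h2 := hst ⟨(k : ℕ) - M.card, hr k hk⟩
            simp only [Fin.le_def] at h2 ⊢
            rw [h2]
            omega
        · -- c = N
          subst h
          have hpos : 0 < c.card := card_pos.mpr (hC c hc).1
          refine ⟨⟨0, hpos⟩, ⟨c.card - 1, by omega⟩, ?_⟩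
          intro k
          simp only [Fin.le_def]
          have := k.isLt
          constructor
          · intro _; omega
          · intro _; exact hσmem k
    · -- every coalition equals N (or C is empty)
      push_neg at hC'
      refine ⟨fun k => ((N.equivFin).symm k : α), ?_, fun k => ((N.equivFin).symm k).2, ?_⟩
      · intro a b hab
        exact (N.equivFin).symm.injective (Subtype.ext hab)
      · intro c hc
        have hcN := hC' c hc
        subst hcN
        have hpos : 0 < c.card := card_pos.mpr (hC c hc).1
        refine ⟨⟨0, hpos⟩, ⟨c.card - 1, by omega⟩, ?_⟩
        intro k
        simp only [Fin.le_def]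
        have := k.isLt
        constructor
        · intro _; omega
        · intro _; exact ((c.equivFin).symm k).2

/-- Every laminar coalition structure on a finite set is contiguous: there is an
enumeration of `N` under which every coalition is an interval of consecutive positions. -/
theorem laminar_is_contiguous {α : Type*} [DecidableEq α] (N : Finset α)
    (C : Set (Finset α))
    (hC : ∀ c ∈ C, c.Nonempty ∧ c ⊆ N)
    (hlam : ∀ c1 ∈ C, ∀ c2 ∈ C, (c1 ∩ c2).Nonempty → c1 ⊆ c2 ∨ c2 ⊆ c1) :
    ∃ σ : Fin N.card → α, Function.Injective σ ∧ (∀ k, σ k ∈ N) ∧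
      ∀ c ∈ C, ∃ s t : Fin N.card, ∀ k, σ k ∈ c ↔ (s ≤ k ∧ k ≤ t) := by
  exact laminar_aux N.card N le_rfl C hC hlam
end

section
/- The full power set of nonempty coalitions on three agents is not centralized: there is no planar representation in which, for each of the three two-element coalitions {1,2},{2,3},{1,3}, some member lies at the center of a circle containing exactly the coalition's members. Formally, there exist no points p1, p2, p3 ∈ ℝ² and no assignment of a center-agent and positive radius to each of {1,2},{2,3},{1,3}, such that for each such coalition c, the circle centered at the position of its designated member (who belongs to c) with its assigned radius contains exactly the points of the members of c (boundary included) among {p1,p2,p3}. -/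
/-- The three two-element coalitions on three agents admit no centralized planar
representation: there are no points `p 0, p 1, p 2` in the plane, center-agents `j c ∈ c`
and radii `r c > 0` for the coalitions `{0,1}, {1,2}, {0,2}`, such that for each such
coalition `c` the closed disc centered at `p (j c)` with radius `r c` contains exactly
the points of the members of `c`. -/
theorem pairs_not_centralized_three :
    ¬ ∃ (p : Fin 3 → EuclideanSpace ℝ (Fin 2)) (j : Finset (Fin 3) → Fin 3)
        (r : Finset (Fin 3) → ℝ),
      ∀ c ∈ ({{0, 1}, {1, 2}, {0, 2}} : Set (Finset (Fin 3))),
        j c ∈ c ∧ 0 < r c ∧ ∀ k : Fin 3, dist (p k) (p (j c)) ≤ r c ↔ k ∈ c := by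
  rintro ⟨p, j, r, h⟩
  obtain ⟨hj1, hr1, hc1⟩ := h {0, 1} (by left; rfl)
  obtain ⟨hj2, hr2, hc2⟩ := h {1, 2} (by right; left; rfl)
  obtain ⟨hj3, hr3, hc3⟩ := h {0, 2} (by right; right; rfl)
  have a10 := (hc1 0).mpr (by decide)
  have a11 := (hc1 1).mpr (by decide)
  have a12 : r {0, 1} < dist (p 2) (p (j ({0, 1} : Finset (Fin 3)))) :=
    lt_of_not_ge fun h' => by have := (hc1 2).mp h'; revert this; decide
  have a21 := (hc2 1).mpr (by decide)
  have a22 := (hc2 2).mpr (by decide)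
  have a20 : r {1, 2} < dist (p 0) (p (j ({1, 2} : Finset (Fin 3)))) :=
    lt_of_not_ge fun h' => by have := (hc2 0).mp h'; revert this; decide
  have a30 := (hc3 0).mpr (by decide)
  have a32 := (hc3 2).mpr (by decide)
  have a31 : r {0, 2} < dist (p 1) (p (j ({0, 2} : Finset (Fin 3)))) :=
    lt_of_not_ge fun h' => by have := (hc3 1).mp h'; revert this; decide
  simp only [Finset.mem_insert, Finset.mem_singleton] at hj1 hj2 hj3
  rcases hj1 with e | e <;> rw [e] at a10 a11 a12 <;>
    rcases hj2 with f | f <;> rw [f] at a21 a22 a20 <;>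
      rcases hj3 with g | g <;> rw [g] at a30 a32 a31 <;>
        linarith [dist_comm (p 0) (p 1), dist_comm (p 1) (p 2), dist_comm (p 0) (p 2)]
end

section
/- (two-color theorem of laminarity) Let N' be a nonempty subset of a finite set N with |N'| = 2k-1 or |N'| = 2k for some k ≥ 1, and let C be a laminar family of nonempty subsets of N. Then N' can be partitioned into sets B and W = N' \ B with |B| = k such that for every c ∈ C, ||B ∩ c| - |W ∩ c|| ≤ 1. -/
/-!
Induction on the ground set `S`. If every set of the family either contains `S` or misses it,
any `B ⊆ S` of half the size works. Otherwise take a trace `A = c ∩ S` that is maximal among the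
nonempty proper traces: by laminarity every other trace lies inside `A`, lies inside `S \ A`, or
is all of `S`. Colour `A` and `S \ A` separately by induction, with sizes chosen so that the two
halves add up to the required one; the union is balanced on `S`.
-/

open Finset

namespace TwoColorLaminar

variable {α : Type*} [DecidableEq α]

def IsLaminar (C : Set (Finset α)) : Prop :=
  ∀ c1 ∈ C, ∀ c2 ∈ C, (c1 ∩ c2).Nonempty → c1 ⊆ c2 ∨ c2 ⊆ c1

def discrepancy (S B c : Finset α) : ℤ := #(B ∩ c) - #((S \ B) ∩ c)

def IsBalanced (C : Set (Finset α)) (S B : Finset α) : Prop :=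
  ∀ c ∈ C, |discrepancy S B c| ≤ 1

/-- `b` is `⌊n / 2⌋` or `⌈n / 2⌉`. -/
def IsHalf (b n : ℕ) : Prop := n ≤ 2 * b + 1 ∧ 2 * b ≤ n + 1

lemma IsHalf.exists_add {b n₁ n₂ : ℕ} (h : IsHalf b (n₁ + n₂)) :
    ∃ b₁ b₂, b₁ + b₂ = b ∧ IsHalf b₁ n₁ ∧ IsHalf b₂ n₂ := by
  unfold IsHalf at *
  rcases le_or_gt (n₁ + n₂) (2 * b) with h' | h'
  · exact ⟨(n₁ + 1) / 2, b - (n₁ + 1) / 2, by omega, by omega, by omega⟩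
  · exact ⟨n₁ / 2, b - n₁ / 2, by omega, by omega, by omega⟩

lemma discrepancy_of_disjoint {S B c : Finset α} (hB : B ⊆ S) (h : Disjoint S c) :
    discrepancy S B c = 0 := by
  have hS : S ∩ c = ∅ := disjoint_iff_inter_eq_empty.mp h
  have hBc : B ∩ c = ∅ := subset_empty.mp (hS ▸ inter_subset_inter_right hB)
  have hWc : (S \ B) ∩ c = ∅ := subset_empty.mp (hS ▸ inter_subset_inter_right sdiff_subset)
  simp [discrepancy, hBc, hWc]

lemma abs_discrepancy_le_one_of_subset {S B c : Finset α} (hB : B ⊆ S) (h : S ⊆ c)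
    (hhalf : IsHalf #B #S) : |discrepancy S B c| ≤ 1 := by
  have hBc : B ∩ c = B := inter_eq_left.mpr (hB.trans h)
  have hWc : (S \ B) ∩ c = S \ B := inter_eq_left.mpr (sdiff_subset.trans h)
  have hW : #(S \ B) + #B = #S := card_sdiff_add_card_eq_card hB
  unfold discrepancy
  rw [hBc, hWc, abs_le]
  unfold IsHalf at hhalf
  omega

lemma discrepancy_eq_of_inter_subset {S A B c : Finset α} (hA : A ⊆ S) (hB : B ⊆ S)
    (h : c ∩ S ⊆ A) : discrepancy S B c = discrepancy A (B ∩ A) c := by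
  have hBc : B ∩ c = (B ∩ A) ∩ c := by
    ext x
    simp only [mem_inter]
    exact ⟨fun ⟨hxB, hxc⟩ => ⟨⟨hxB, h (mem_inter.mpr ⟨hxc, hB hxB⟩)⟩, hxc⟩,
      fun ⟨⟨hxB, _⟩, hxc⟩ => ⟨hxB, hxc⟩⟩
  have hWc : (S \ B) ∩ c = (A \ (B ∩ A)) ∩ c := by
    ext x
    simp only [mem_inter, mem_sdiff]
    exact ⟨fun ⟨⟨hxS, hxB⟩, hxc⟩ => ⟨⟨h (mem_inter.mpr ⟨hxc, hxS⟩), fun h' => hxB h'.1⟩, hxc⟩,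
      fun ⟨⟨hxA, hxB⟩, hxc⟩ => ⟨⟨hA hxA, fun h' => hxB ⟨h', hxA⟩⟩, hxc⟩⟩
  rw [discrepancy, discrepancy, hBc, hWc]

lemma isBalanced_of_forall_disjoint_or_subset {C : Set (Finset α)} {S B : Finset α}
    (h : ∀ c ∈ C, Disjoint S c ∨ S ⊆ c) (hB : B ⊆ S) (hhalf : IsHalf #B #S) :
    IsBalanced C S B := by
  intro c hc
  rcases h c hc with hdisj | hsub
  · simp [discrepancy_of_disjoint hB hdisj]
  · exact abs_discrepancy_le_one_of_subset hB hsub hhalf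

lemma IsBalanced.union {C : Set (Finset α)} {S A B₁ B₂ : Finset α} (hA : A ⊆ S)
    (hsplit : ∀ c ∈ C, c ∩ S ⊆ A ∨ c ∩ S ⊆ S \ A ∨ S ⊆ c)
    (hB₁ : B₁ ⊆ A) (hB₂ : B₂ ⊆ S \ A) (h₁ : IsBalanced C A B₁) (h₂ : IsBalanced C (S \ A) B₂)
    (hhalf : IsHalf #(B₁ ∪ B₂) #S) : IsBalanced C S (B₁ ∪ B₂) := by
  have hdisj : Disjoint A (S \ A) := disjoint_sdiff
  have hB : B₁ ∪ B₂ ⊆ S := union_subset (hB₁.trans hA) (hB₂.trans sdiff_subset)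
  have hB_inter_A : (B₁ ∪ B₂) ∩ A = B₁ := by
    rw [union_inter_distrib_right, inter_eq_left.mpr hB₁,
      disjoint_iff_inter_eq_empty.mp ((hdisj.mono_right hB₂).symm), union_empty]
  have hB_inter_sdiff : (B₁ ∪ B₂) ∩ (S \ A) = B₂ := by
    rw [union_inter_distrib_right, inter_eq_left.mpr hB₂,
      disjoint_iff_inter_eq_empty.mp (hdisj.mono_left hB₁), empty_union]
  intro c hc
  rcases hsplit c hc with hcA | hcA' | hSc
  · rw [discrepancy_eq_of_inter_subset hA hB hcA, hB_inter_A]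
    exact h₁ c hc
  · rw [discrepancy_eq_of_inter_subset sdiff_subset hB hcA', hB_inter_sdiff]
    exact h₂ c hc
  · exact abs_discrepancy_le_one_of_subset hB hSc hhalf

lemma IsLaminar.exists_split {C : Set (Finset α)} (hC : IsLaminar C) {S c₀ : Finset α}
    (hc₀ : c₀ ∈ C) (hmeet : ¬Disjoint S c₀) (hnsub : ¬S ⊆ c₀) :
    ∃ A ⊂ S, A.Nonempty ∧ ∀ c ∈ C, c ∩ S ⊆ A ∨ c ∩ S ⊆ S \ A ∨ S ⊆ c := by
  classical
  set T := S.powerset.filter (fun d => d.Nonempty ∧ d ≠ S ∧ ∃ c ∈ C, c ∩ S = d)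
  have hmemT {d : Finset α} : d ∈ T ↔ d ⊆ S ∧ d.Nonempty ∧ d ≠ S ∧ ∃ c ∈ C, c ∩ S = d := by
    simp [T]
  have hc₀T : c₀ ∩ S ∈ T := hmemT.mpr
    ⟨inter_subset_right, by rwa [inter_comm, ← not_disjoint_iff_nonempty_inter],
      fun h => hnsub (h ▸ inter_subset_left), c₀, hc₀, rfl⟩
  obtain ⟨A, -, hAmax⟩ := T.exists_le_maximal hc₀T
  obtain ⟨hAS, hAne, hAneS, c₁, hc₁, rfl⟩ := hmemT.mp hAmax.prop
  refine ⟨c₁ ∩ S, Finset.ssubset_iff_subset_ne.mpr ⟨hAS, hAneS⟩, hAne, fun c hc => ?_⟩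
  by_cases hcc₁ : (c ∩ c₁).Nonempty
  · rcases hC c hc c₁ hc₁ hcc₁ with hsub | hsub
    · exact Or.inl (inter_subset_inter_right hsub)
    · by_cases hSc : S ⊆ c
      · exact Or.inr (Or.inr hSc)
      have hcT : c ∩ S ∈ T := hmemT.mpr ⟨inter_subset_right,
        hAne.mono (inter_subset_inter_right hsub), fun h => hSc (h ▸ inter_subset_left), c, hc, rfl⟩
      exact Or.inl (hAmax.eq_of_ge hcT (inter_subset_inter_right hsub)).le
  · refine Or.inr (Or.inl fun x hx => mem_sdiff.mpr ⟨(mem_inter.mp hx).2, fun hxA => ?_⟩)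
    exact hcc₁ ⟨x, mem_inter.mpr ⟨(mem_inter.mp hx).1, (mem_inter.mp hxA).1⟩⟩

theorem IsLaminar.exists_isBalanced {C : Set (Finset α)} (hC : IsLaminar C) (S : Finset α)
    {b : ℕ} (hb : IsHalf b #S) : ∃ B ⊆ S, #B = b ∧ IsBalanced C S B := by
  induction S using Finset.strongInduction generalizing b with
  | H S ih =>
    by_cases htriv : ∀ c ∈ C, Disjoint S c ∨ S ⊆ c
    · have hbS : b ≤ #S := by unfold IsHalf at hb; omega
      obtain ⟨B, hBS, rfl⟩ := exists_subset_card_eq hbS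
      exact ⟨B, hBS, rfl, isBalanced_of_forall_disjoint_or_subset htriv hBS hb⟩
    push Not at htriv
    obtain ⟨c₀, hc₀, hmeet, hnsub⟩ := htriv
    obtain ⟨A, hAS, hAne, hsplit⟩ := hC.exists_split hc₀ hmeet hnsub
    have hcard : #A + #(S \ A) = #S := 
      (add_comm _ _).trans (card_sdiff_add_card_eq_card hAS.le)
    obtain ⟨b₁, b₂, rfl, hb₁, hb₂⟩ := IsHalf.exists_add (hcard ▸ hb)
    obtain ⟨B₁, hB₁A, rfl, hbal₁⟩ := ih A hAS hb₁
    obtain ⟨B₂, hB₂A, rfl, hbal₂⟩ := ih (S \ A) (sdiff_ssubset hAS.le hAne) hb₂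
    have hcardB : #(B₁ ∪ B₂) = #B₁ + #B₂ :=
      card_union_of_disjoint (disjoint_sdiff.mono hB₁A hB₂A)
    refine ⟨B₁ ∪ B₂, union_subset (hB₁A.trans hAS.le) (hB₂A.trans sdiff_subset), hcardB, ?_⟩
    exact IsBalanced.union hAS.le hsplit hB₁A hB₂A hbal₁ hbal₂ (hcardB ▸ hb)

end TwoColorLaminar

theorem two_color_laminar_general {α : Type*} [DecidableEq α] (N' : Finset α)
    (k : ℕ)
    (hcard : N'.card = 2 * k - 1 ∨ N'.card = 2 * k)
    (C : Set (Finset α))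
    (hlam : ∀ c1 ∈ C, ∀ c2 ∈ C, (c1 ∩ c2).Nonempty → c1 ⊆ c2 ∨ c2 ⊆ c1) :
    ∃ B ⊆ N', B.card = k ∧
      ∀ c ∈ C, |((B ∩ c).card : ℤ) - (((N' \ B) ∩ c).card : ℤ)| ≤ 1 :=
  TwoColorLaminar.IsLaminar.exists_isBalanced hlam N' (by unfold TwoColorLaminar.IsHalf; omega)

/-- The two-color theorem of laminarity: any subset `N'` of size `2k-1` or `2k` can be
split into a black set `B` of size `k` and a white set `N' \ B` so that inside every
coalition of a laminar family the numbers of black and white agents differ by at most 1. -/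
theorem two_color_laminar {α : Type*} [DecidableEq α] (N N' : Finset α)
    (hsub : N' ⊆ N) (hne : N'.Nonempty) (k : ℕ) (hk : 1 ≤ k)
    (hcard : N'.card = 2 * k - 1 ∨ N'.card = 2 * k)
    (C : Set (Finset α))
    (hC : ∀ c ∈ C, c.Nonempty ∧ c ⊆ N)
    (hlam : ∀ c1 ∈ C, ∀ c2 ∈ C, (c1 ∩ c2).Nonempty → c1 ⊆ c2 ∨ c2 ⊆ c1) :
    ∃ B ⊆ N', B.card = k ∧
      ∀ c ∈ C, |((B ∩ c).card : ℤ) - (((N' \ B) ∩ c).card : ℤ)| ≤ 1 :=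
  two_color_laminar_general N' k hcard C hlam
end

section
/- In an RSG, an allocation a is a Nash equilibrium if and only if: for each type 2 resource i, |a_i| = q_i; for each type 1 resource i, |a_i| ∈ {q_i - 1, q_i}; and for some type 1 resource i, |a_i| = q_i. -/
variable {N M : Type*}

/-- Number of agents assigned to resource `i` at allocation `a`. -/
def load [Fintype N] [DecidableEq M] (a : N → M) (i : M) : ℕ :=
  (Finset.univ.filter (fun j => a j = i)).card

/-- The cost incurred by agent `j` at allocation `a` for cost profile `f`. -/
def cost [Fintype N] [DecidableEq M] (f : M → ℕ → ℕ) (a : N → M) (j : N) : ℕ :=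
  f (a j) (load a (a j))

/-- The maximum cost over resources at allocation `a`. -/
def maxcost [Fintype N] [Fintype M] [DecidableEq M] (f : M → ℕ → ℕ) (a : N → M) : ℕ :=
  Finset.univ.sup (fun i => f i (load a i))

/-- The minmaxcost `α` of the RSG: minimum over allocations of the maxcost. -/
noncomputable def minmax (N : Type*) [Fintype N] [Fintype M] [DecidableEq M] (f : M → ℕ → ℕ) : ℕ :=
  sInf (Set.range (maxcost (N := N) f))

/-- The quota of resource `i`: the largest `t` with `f i t ≤ α`. -/
noncomputable def quota (f : M → ℕ → ℕ) (α : ℕ) (i : M) : ℕ :=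
  sSup {t | f i t ≤ α}

/-- `a` is a Nash equilibrium: no single agent can strictly decrease its cost
by switching to another resource. -/
def Nash [Fintype N] [DecidableEq M] (f : M → ℕ → ℕ) (a : N → M) : Prop :=
  ∀ j : N, ∀ i : M, i ≠ a j → cost f a j ≤ f i (load a i + 1)

/-- `a` is `c`-stable: coalition `c` has no deviation making every member weakly
better off and some member strictly better off. -/
def cStable [Fintype N] [DecidableEq N] [DecidableEq M]
    (f : M → ℕ → ℕ) (a : N → M) (c : Finset N) : Prop :=
  ¬ ∃ b : N → M, (∀ j ∉ c, b j = a j) ∧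
      (∀ j ∈ c, cost f b j ≤ cost f a j) ∧ (∃ j ∈ c, cost f b j < cost f a j)

/-!
Write `α` for the minmaxcost. Being a Nash equilibrium amounts to three conditions on costs: every
resource costs at most `α` (an optimal allocation shows that the quotas have room for all agents,
so an agent above its quota could move to a resource below its quota), some resource costs exactly
`α` (otherwise the allocation would beat the minmaxcost), and every resource would cost at least
`α` with one more agent (an agent paying `α` must not gain by moving). Since `t ≤ q_i ↔ f_i t ≤ α`,
these cost bounds become the bounds on the loads by quota and type.
-/

section Quota

variable {f : M → ℕ → ℕ} {i : M} {α t : ℕ}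

theorem le_quota_iff (hmono : StrictMono (f i)) (hzero : f i 0 = 0) :
    t ≤ quota f α i ↔ f i t ≤ α := by
  have hbdd : BddAbove {t | f i t ≤ α} := ⟨α, fun s hs => hmono.le_apply.trans hs⟩
  refine ⟨fun ht => ?_, fun ht => le_csSup hbdd ht⟩
  have hmem : f i (quota f α i) ≤ α := Nat.sSup_mem ⟨0, by simp [hzero]⟩ hbdd
  exact (hmono.monotone ht).trans hmem

theorem apply_quota_le (hmono : StrictMono (f i)) (hzero : f i 0 = 0) :
    f i (quota f α i) ≤ α :=
  (le_quota_iff hmono hzero).1 le_rfl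

theorem lt_apply_quota_succ (hmono : StrictMono (f i)) (hzero : f i 0 = 0) :
    α < f i (quota f α i + 1) :=
  not_le.1 fun h => by have := (le_quota_iff hmono hzero).2 h; omega

theorem apply_eq_iff_eq_quota (hmono : StrictMono (f i)) (hzero : f i 0 = 0) :
    f i t = α ↔ f i (quota f α i) = α ∧ t = quota f α i := by
  refine ⟨fun ht => ?_, fun ⟨hq, ht⟩ => ht ▸ hq⟩
  have hle : t ≤ quota f α i := (le_quota_iff hmono hzero).2 ht.le
  have hge : quota f α i ≤ t := hmono.le_iff_le.1 (ht ▸ apply_quota_le hmono hzero)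
  obtain rfl := le_antisymm hle hge
  exact ⟨ht, rfl⟩

/-- On a type-2 resource `f i` skips the value `α`, so reaching `α` with one more agent already
means being at the quota; on a type-1 resource the quota itself costs exactly `α`. -/
theorem apply_le_and_le_apply_succ_iff (hmono : StrictMono (f i)) (hzero : f i 0 = 0) :
    (f i t ≤ α ∧ α ≤ f i (t + 1)) ↔
      (f i (quota f α i) < α → t = quota f α i) ∧
      (f i (quota f α i) = α → t = quota f α i - 1 ∨ t = quota f α i) := by
  rw [← le_quota_iff hmono hzero]
  rcases (apply_quota_le hmono hzero (α := α)).lt_or_eq with hlt | heq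
  · have hsucc : α ≤ f i (t + 1) ↔ quota f α i ≤ t := by
      refine ⟨fun h => ?_, fun h => ?_⟩
      · by_contra! ht
        exact absurd (h.trans (hmono.monotone ht)) (not_le.2 hlt)
      · exact (lt_apply_quota_succ hmono hzero).le.trans (hmono.monotone (by omega))
    simp only [hsucc, hlt, hlt.ne, true_imp_iff, false_imp_iff, and_true]
    omega
  · have hsucc : α ≤ f i (t + 1) ↔ quota f α i ≤ t + 1 := by
      conv_lhs => rw [← heq]
      exact hmono.le_iff_le
    simp only [hsucc, heq, lt_irrefl, false_imp_iff, true_imp_iff, true_and]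
    omega

end Quota

section Allocation

variable [Fintype N] [DecidableEq M]

theorem sum_load [Fintype M] (a : N → M) : ∑ i, load a i = Fintype.card N :=
  (Finset.card_eq_sum_card_fiberwise fun j _ => Finset.mem_univ (a j)).symm

theorem exists_of_load_pos {a : N → M} {i : M} (h : 0 < load a i) : ∃ j, a j = i := by
  obtain ⟨j, hj⟩ := Finset.card_pos.1 h
  exact ⟨j, (Finset.mem_filter.1 hj).2⟩

theorem apply_load_le_maxcost [Fintype M] (f : M → ℕ → ℕ) (a : N → M) (i : M) :
    f i (load a i) ≤ maxcost f a :=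
  Finset.le_sup (f := fun i => f i (load a i)) (Finset.mem_univ i)

theorem minmax_le_maxcost [Fintype M] (f : M → ℕ → ℕ) (a : N → M) :
    minmax N f ≤ maxcost f a :=
  Nat.sInf_le ⟨a, rfl⟩

theorem exists_maxcost_eq_minmax [Fintype M] [Nonempty (N → M)] (f : M → ℕ → ℕ) :
    ∃ a : N → M, maxcost f a = minmax N f :=
  Nat.sInf_mem (Set.range_nonempty _)

theorem card_le_sum_quota [Fintype M] [Nonempty (N → M)] {f : M → ℕ → ℕ}
    (hmono : ∀ i, StrictMono (f i)) (hzero : ∀ i, f i 0 = 0) :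
    Fintype.card N ≤ ∑ i, quota f (minmax N f) i := by
  obtain ⟨b, hb⟩ := exists_maxcost_eq_minmax (N := N) f
  rw [← sum_load b]
  refine Finset.sum_le_sum fun i _ => (le_quota_iff (hmono i) (hzero i)).2 ?_
  exact hb ▸ apply_load_le_maxcost f b i

theorem nash_of_apply_load_le_of_le_apply_load_succ {f : M → ℕ → ℕ} {a : N → M} (c : ℕ)
    (hle : ∀ i, f i (load a i) ≤ c) (hge : ∀ i, c ≤ f i (load a i + 1)) : Nash f a :=
  fun j i _ => (hle (a j)).trans (hge i)

namespace Nash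

variable {f : M → ℕ → ℕ} {a : N → M}

theorem apply_load_le_apply_load_succ (h : Nash f a) (hmono : ∀ i, Monotone (f i))
    {i₀ : M} (hi₀ : 0 < load a i₀) (i : M) : f i₀ (load a i₀) ≤ f i (load a i + 1) := by
  obtain ⟨j, rfl⟩ := exists_of_load_pos hi₀
  by_cases hi : i = a j
  · subst hi
    exact hmono _ (Nat.le_succ _)
  · exact h j i hi

theorem apply_load_le_minmax [Fintype M] [Nonempty (N → M)] (h : Nash f a)
    (hmono : ∀ i, StrictMono (f i)) (hzero : ∀ i, f i 0 = 0) (i₀ : M) :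
    f i₀ (load a i₀) ≤ minmax N f := by
  set q := quota f (minmax N f)
  rw [← le_quota_iff (hmono i₀) (hzero i₀)]
  by_contra! hi₀
  have hsum : ∑ i, load a i ≤ ∑ i, q i := sum_load a ▸ card_le_sum_quota hmono hzero
  -- the surplus on `i₀` forces a resource below its quota, and moving there is profitable
  obtain ⟨i, -, hi⟩ : ∃ i ∈ Finset.univ, load a i < q i := by
    by_contra! hall
    exact absurd hsum (not_le.2 (Finset.sum_lt_sum hall ⟨i₀, Finset.mem_univ _, hi₀⟩))
  have hdev := h.apply_load_le_apply_load_succ (fun i => (hmono i).monotone)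
    (Nat.zero_lt_of_lt hi₀) i
  refine lt_irrefl (minmax N f) ?_
  calc minmax N f < f i₀ (q i₀ + 1) := lt_apply_quota_succ (hmono i₀) (hzero i₀)
    _ ≤ f i₀ (load a i₀) := (hmono i₀).monotone hi₀
    _ ≤ f i (load a i + 1) := hdev
    _ ≤ minmax N f := (le_quota_iff (hmono i) (hzero i)).1 hi

theorem minmax_le_apply_load_succ [Fintype M] (h : Nash f a) (hmono : ∀ i, Monotone (f i))
    (hzero : ∀ i, f i 0 = 0) {i₀ : M} (hi₀ : f i₀ (load a i₀) = minmax N f) (i : M) :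
    minmax N f ≤ f i (load a i + 1) := by
  rcases Nat.eq_zero_or_pos (load a i₀) with h0 | hpos
  · rw [← hi₀, h0, hzero]
    exact Nat.zero_le _
  · exact hi₀ ▸ h.apply_load_le_apply_load_succ hmono hpos i

end Nash

theorem exists_apply_load_eq_minmax [Fintype M] [Nonempty M] {f : M → ℕ → ℕ} {a : N → M}
    (h : ∀ i, f i (load a i) ≤ minmax N f) : ∃ i, f i (load a i) = minmax N f := by
  obtain ⟨i, -, hi⟩ := Finset.exists_mem_eq_sup Finset.univ Finset.univ_nonempty
    fun i => f i (load a i)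
  exact ⟨i, le_antisymm (h i) (hi ▸ minmax_le_maxcost f a)⟩

theorem nash_iff_apply_load_le_minmax [Fintype M] [Nonempty M] {f : M → ℕ → ℕ}
    (hmono : ∀ i, StrictMono (f i)) (hzero : ∀ i, f i 0 = 0) (a : N → M) :
    Nash f a ↔ (∀ i, f i (load a i) ≤ minmax N f ∧ minmax N f ≤ f i (load a i + 1)) ∧
      ∃ i, f i (load a i) = minmax N f := by
  refine ⟨fun h => ?_, fun ⟨hbounds, _⟩ => nash_of_apply_load_le_of_le_apply_load_succ
    (minmax N f) (fun i => (hbounds i).1) (fun i => (hbounds i).2)⟩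
  have hle := h.apply_load_le_minmax hmono hzero
  obtain ⟨i₀, hi₀⟩ := exists_apply_load_eq_minmax hle
  exact ⟨fun i => ⟨hle i, h.minmax_le_apply_load_succ (fun i => (hmono i).monotone) hzero hi₀ i⟩,
    i₀, hi₀⟩

end Allocation

/-- Characterization of Nash equilibria in RSGs (Anshelevich et al.): `a` is a Nash
equilibrium iff every type-2 resource is filled to its quota, every type-1 resource is
assigned its quota or one less, and some type-1 resource is filled to its quota. -/
theorem nash_characterization [Fintype N] [Fintype M] [DecidableEq M] [Nonempty M]
    (f : M → ℕ → ℕ) (hmono : ∀ i, StrictMono (f i)) (hzero : ∀ i, f i 0 = 0)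
    (a : N → M) :
    Nash f a ↔
      ((∀ i : M, f i (quota f (minmax N f) i) < minmax N f →
          load a i = quota f (minmax N f) i) ∧
       (∀ i : M, f i (quota f (minmax N f) i) = minmax N f →
          load a i = quota f (minmax N f) i - 1 ∨ load a i = quota f (minmax N f) i) ∧
       (∃ i : M, f i (quota f (minmax N f) i) = minmax N f ∧
          load a i = quota f (minmax N f) i)) := by
  rw [nash_iff_apply_load_le_minmax hmono hzero, ← and_assoc, ← forall_and]
  exact and_congr (forall_congr' fun i => apply_le_and_le_apply_succ_iff (hmono i) (hzero i))
    (exists_congr fun i => apply_eq_iff_eq_quota (hmono i) (hzero i))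
end

section
/- In an identical-resource RSG, for any contiguous coalition structure C there exists a C-stable allocation: assign agents 1,2,...,n round-robin to resources 1,2,...,m (agent i goes to resource ((i-1) mod m) + 1); the resulting allocation is a Nash equilibrium and for every coalition c ∈ C (whose members are consecutive along the path 1-2-...-n), and every high resource i and low resource i', one has |a_i ∩ c| ≤ |a_{i'} ∩ c| + 1, hence a is c-stable for all c ∈ C. -/
open Finset

lemma gcount_aux (m : ℕ) (hm : 0 < m) (r : ℕ) (hr : r < m) (N : ℕ) :
    ((range N).filter (fun k => k % m = r)).card = N / m + if r < N % m then 1 else 0 := by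
  induction N with
  | zero => simp
  | succ N ih =>
    have hdm := Nat.div_add_mod N m
    have hN : N + 1 = (N % m + 1) + m * (N / m) := by omega
    have hdiv : (N+1) / m = (N % m + 1) / m + N / m := by
      rw [hN, Nat.add_mul_div_left _ _ hm]
    have hmod : (N+1) % m = (N % m + 1) % m := by
      rw [hN, Nat.add_mul_mod_self_left]
    have hlt := Nat.mod_lt N hm
    rw [Finset.range_add_one, Finset.filter_insert]
    rcases Nat.lt_or_ge (N % m + 1) m with h | h
    · have h1 : (N+1) / m = N / m := by rw [hdiv, Nat.div_eq_of_lt h]; omega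
      have h2 : (N+1) % m = N % m + 1 := by rw [hmod, Nat.mod_eq_of_lt h]
      by_cases hc : N % m = r
      · rw [if_pos hc, Finset.card_insert_of_notMem (by simp), ih, h1, h2]
        split_ifs <;> omega
      · rw [if_neg hc, ih, h1, h2]
        split_ifs <;> omega
    · have hem : N % m + 1 = m := by omega
      have h1 : (N+1) / m = N / m + 1 := by rw [hdiv, hem, Nat.div_self hm]; omega
      have h2 : (N+1) % m = 0 := by rw [hmod, hem, Nat.mod_self]
      by_cases hc : N % m = r
      · rw [if_pos hc, Finset.card_insert_of_notMem (by simp), ih, h1, h2]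
        split_ifs <;> omega
      · rw [if_neg hc, ih, h1, h2]
        split_ifs <;> omega

lemma cnt_split_aux (m : ℕ) (S T : ℕ) (hST : S ≤ T) (r : ℕ) :
    ((range T).filter (fun k => S ≤ k ∧ k % m = r)).card
      + ((range S).filter (fun k => k % m = r)).card
      = ((range T).filter (fun k => k % m = r)).card := by
  have h := Finset.card_filter_add_card_filter_not
    (s := (range T).filter (fun k => k % m = r)) (p := fun k => S ≤ k)
  rw [Finset.filter_filter, Finset.filter_filter] at h
  rw [← h]
  congr 1
  · congr 1; apply Finset.filter_congr; intro k _; exact and_comm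
  · congr 1; ext k; simp only [Finset.mem_filter, Finset.mem_range]; constructor
    · rintro ⟨h1, h2⟩
      exact ⟨by omega, h2, by omega⟩
    · rintro ⟨h1, h2, h3⟩
      exact ⟨by omega, h2⟩

lemma balance_aux (m : ℕ) (hm : 0 < m) (S T : ℕ) (r r' : ℕ) (hr : r < m) (hr' : r' < m) :
    ((range T).filter (fun k => S ≤ k ∧ k % m = r)).card
      ≤ ((range T).filter (fun k => S ≤ k ∧ k % m = r')).card + 1 := by
  rcases Nat.lt_or_ge T S with h | h
  · have he : ((range T).filter (fun k => S ≤ k ∧ k % m = r)) = ∅ := by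
      apply Finset.filter_false_of_mem; intro k hk; simp only [Finset.mem_range] at hk
      rintro ⟨h1, -⟩; omega
    simp [he]
  · have e1 := cnt_split_aux m S T h r
    have e2 := cnt_split_aux m S T h r'
    rw [gcount_aux m hm r hr, gcount_aux m hm r hr] at e1
    rw [gcount_aux m hm r' hr', gcount_aux m hm r' hr'] at e2
    split_ifs at e1 e2 <;> omega

lemma sum_le_sum_add_card_aux {α : Type*} [DecidableEq α] (A B : Finset α) (u v : α → ℕ)
    (hBA : B.card ≤ A.card) (h : ∀ i ∈ B, ∀ i' ∈ A, u i ≤ v i' + 1) :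
    ∑ i ∈ B, u i ≤ ∑ i' ∈ A, v i' + B.card := by
  rcases B.eq_empty_or_nonempty with hB | hB
  · simp [hB]
  · have hA : A.Nonempty := by
      rw [← Finset.card_pos]
      have := Finset.card_pos.mpr hB
      omega
    obtain ⟨i0, hi0, hmin⟩ := A.exists_min_image v hA
    have h1 : ∑ i ∈ B, u i ≤ ∑ _i ∈ B, (v i0 + 1) :=
      Finset.sum_le_sum (fun i hi => h i hi i0 hi0)
    have h2 : ∑ _i ∈ B, (v i0 + 1) = B.card * v i0 + B.card := by
      rw [Finset.sum_const, smul_eq_mul]; ring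
    have h3 : A.card * v i0 ≤ ∑ i' ∈ A, v i' := by
      have := Finset.card_nsmul_le_sum A v (v i0) (fun i' hi' => hmin i' hi')
      simpa [smul_eq_mul] using this
    have h4 : B.card * v i0 ≤ A.card * v i0 := Nat.mul_le_mul_right _ hBA
    omega


variable {N M : Type*}

/-- In an identical-resource RSG, for any contiguous coalition structure `C` (w.r.t. the
path `0 - 1 - ⋯ - (n-1)`), the round-robin allocation (agent `i` to resource `i mod m`)
is a Nash equilibrium, satisfies the balance condition `|a_i ∩ c| ≤ |a_{i'} ∩ c| + 1` for
every high resource `i` and low resource `i'`, and is `c`-stable for all `c ∈ C`;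
in particular a `C`-stable allocation exists. -/
theorem identical_contiguous_equilibrium (n m : ℕ) (hm : 0 < m)
    (f : ℕ → ℕ) (hmono : StrictMono f) (hzero : f 0 = 0)
    (q : ℕ)
    (hq : q = quota (fun _ : Fin m => f) (minmax (Fin n) (fun _ : Fin m => f)) ⟨0, hm⟩)
    (C : Set (Finset (Fin n)))
    (hC : ∀ c ∈ C, c.Nonempty ∧ ∃ s t : Fin n, ∀ k : Fin n, k ∈ c ↔ (s ≤ k ∧ k ≤ t))
    (a : Fin n → Fin m) (ha : ∀ i : Fin n, (a i).val = i.val % m) :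
    Nash (fun _ : Fin m => f) a ∧
      (∀ c ∈ C, ∀ i i' : Fin m, load a i = q → load a i' = q - 1 →
        (c.filter (fun j => a j = i)).card ≤ (c.filter (fun j => a j = i')).card + 1) ∧
      (∀ c ∈ C, cStable (fun _ : Fin m => f) a c) := by
  classical
  set L := n / m with hLdef
  have hval : ∀ (j : Fin n) (i : Fin m), a j = i ↔ (j : ℕ) % m = (i : ℕ) := by
    intro j i; rw [Fin.ext_iff, ha]
  -- load formula
  have hload : ∀ i : Fin m, load a i = L + if (i : ℕ) < n % m then 1 else 0 := by
    intro i
    rw [load, Finset.card_filter]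
    have e : ∀ j : Fin n, (if a j = i then 1 else 0)
        = (fun k : ℕ => if k % m = (i : ℕ) then 1 else 0) (j : ℕ) := by
      intro j; simp only [hval j i]
    rw [Finset.sum_congr rfl (fun j _ => e j),
      Fin.sum_univ_eq_sum_range (fun k => if k % m = (i : ℕ) then 1 else 0) n,
      ← Finset.card_filter]
    exact gcount_aux m hm _ i.isLt n
  have hl1 : ∀ i : Fin m, L ≤ load a i := by
    intro i; rw [hload i]; split_ifs <;> omega
  have hl2 : ∀ i : Fin m, load a i ≤ L + 1 := by
    intro i; rw [hload i]; split_ifs <;> omega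
  -- the balance condition for all pairs
  have hXB : ∀ c ∈ C, ∀ i i' : Fin m,
      (c.filter (fun j => a j = i)).card ≤ (c.filter (fun j => a j = i')).card + 1 := by
    intro c hcC i i'
    obtain ⟨-, s, t, hc⟩ := hC c hcC
    have hx : ∀ r : Fin m, (c.filter (fun j => a j = r)).card
        = ((range ((t : ℕ) + 1)).filter (fun k => (s : ℕ) ≤ k ∧ k % m = (r : ℕ))).card := by
      intro r
      have h1 : c.filter (fun j => a j = r)
          = univ.filter (fun j : Fin n =>
              ((s : ℕ) ≤ (j : ℕ) ∧ (j : ℕ) ≤ (t : ℕ)) ∧ (j : ℕ) % m = (r : ℕ)) := by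
        ext j
        simp only [Finset.mem_filter, Finset.mem_univ, true_and, hc j, Fin.le_def, hval j r]
      rw [h1, Finset.card_filter]
      have e : ∀ j : Fin n,
          (if ((s : ℕ) ≤ (j : ℕ) ∧ (j : ℕ) ≤ (t : ℕ)) ∧ (j : ℕ) % m = (r : ℕ) then 1 else 0)
          = (fun k : ℕ => if ((s : ℕ) ≤ k ∧ k ≤ (t : ℕ)) ∧ k % m = (r : ℕ) then 1 else 0)
              (j : ℕ) := fun j => rfl
      rw [Finset.sum_congr rfl (fun j _ => e j),
        Fin.sum_univ_eq_sum_range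
          (fun k => if ((s : ℕ) ≤ k ∧ k ≤ (t : ℕ)) ∧ k % m = (r : ℕ) then 1 else 0) n,
        ← Finset.card_filter]
      congr 1
      ext k
      simp only [Finset.mem_filter, Finset.mem_range]
      have ht := t.isLt
      constructor
      · rintro ⟨h1, ⟨h2, h3⟩, h4⟩
        exact ⟨by omega, h2, h4⟩
      · rintro ⟨h1, h2, h3⟩
        exact ⟨by omega, ⟨h2, by omega⟩, h3⟩
    rw [hx i, hx i']
    exact balance_aux m hm _ _ _ _ i.isLt i'.isLt
  refine ⟨?_, fun c hcC i i' _ _ => hXB c hcC i i', ?_⟩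
  · -- Nash
    intro j i _
    show f (load a (a j)) ≤ f (load a i + 1)
    apply hmono.monotone
    have := hl2 (a j); have := hl1 i
    omega
  · -- cStable
    intro c hcC
    rintro ⟨b, hb1, hb2, j0, hj0c, hj0⟩
    -- translate costs to loads
    have hF3 : ∀ j ∈ c, load b (b j) ≤ load a (a j) :=
      fun j hj => hmono.le_iff_le.mp (hb2 j hj)
    have hF3s : load b (b j0) < load a (a j0) := hmono.lt_iff_lt.mp hj0
    -- load decomposition
    have hsplit : ∀ (g : Fin n → Fin m), (∀ j ∉ c, g j = a j) → ∀ i : Fin m,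
        load g i = (c.filter (fun j => g j = i)).card
          + (univ.filter (fun j => a j = i ∧ j ∉ c)).card := by
      intro g hg i
      have h := Finset.card_filter_add_card_filter_not
        (s := (univ : Finset (Fin n)).filter (fun j => g j = i)) (p := fun j => j ∈ c)
      rw [Finset.filter_filter, Finset.filter_filter] at h
      have e1 : univ.filter (fun j : Fin n => g j = i ∧ j ∈ c)
          = c.filter (fun j => g j = i) := by
        ext j; simp only [Finset.mem_filter, Finset.mem_univ, true_and]; tauto
      have e2 : univ.filter (fun j : Fin n => g j = i ∧ ¬ j ∈ c)
          = univ.filter (fun j => a j = i ∧ j ∉ c) := by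
        ext j; simp only [Finset.mem_filter, Finset.mem_univ, true_and]
        constructor
        · rintro ⟨h1, h2⟩; exact ⟨by rw [← hg j h2]; exact h1, h2⟩
        · rintro ⟨h1, h2⟩; exact ⟨by rw [hg j h2]; exact h1, h2⟩
      rw [e1, e2] at h
      rw [load, ← h]
    have hF1 : ∀ i : Fin m, load b i + (c.filter (fun j => a j = i)).card
        = load a i + (c.filter (fun j => b j = i)).card := by
      intro i
      have h1 := hsplit b hb1 i
      have h2 := hsplit a (fun _ _ => rfl) i
      omega
    -- total loads
    have hfib : ∀ (g : Fin n → Fin m), ∑ i : Fin m, load g i = n := by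
      intro g
      have h := Finset.card_eq_sum_card_fiberwise
        (s := (univ : Finset (Fin n))) (t := (univ : Finset (Fin m))) (f := g)
        (fun j _ => Finset.mem_univ _)
      simpa [load, Finset.card_univ] using h.symm
    -- upper bound on new loads
    have hub : ∀ i : Fin m, load b i ≤ L + 1 := by
      intro i
      by_cases hy : (c.filter (fun j => b j = i)).Nonempty
      · obtain ⟨j, hj⟩ := hy
        obtain ⟨hjc, hji⟩ := Finset.mem_filter.mp hj
        have h1 := hF3 j hjc
        rw [hji] at h1
        have h2 := hl2 (a j)
        omega
      · have hy0 : (c.filter (fun j => b j = i)).card = 0 := by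
          rw [Finset.card_eq_zero]; exact Finset.not_nonempty_iff_eq_empty.mp hy
        have h1 := hF1 i
        have h2 := hl2 i
        omega
    set T : Finset (Fin m) := univ.filter (fun i => load b i = L + 1) with hTdef
    set Hs : Finset (Fin m) := univ.filter (fun i => load a i = L + 1) with hHdef
    have hmemT : ∀ i : Fin m, i ∈ T ↔ load b i = L + 1 := by
      intro i; simp [hTdef]
    have hmemH : ∀ i : Fin m, i ∈ Hs ↔ load a i = L + 1 := by
      intro i; simp [hHdef]
    have hmu0 : load b (b j0) ≤ L := by
      have := hl2 (a j0); omega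
    have hbj0T : b j0 ∉ T := by
      rw [hmemT]; omega
    -- pointwise ℓ i = L + χ_Hs i
    have hlptw : ∀ i : Fin m, load a i = L + if i ∈ Hs then 1 else 0 := by
      intro i
      have h1 := hl1 i; have h2 := hl2 i
      by_cases h : i ∈ Hs
      · rw [if_pos h]; exact (hmemH i).mp h
      · rw [if_neg h, hmemH] at *
        omega
    -- sum of indicator = card
    have hind : ∀ S : Finset (Fin m), ∑ i : Fin m, (if i ∈ S then 1 else 0) = S.card := by
      intro S
      rw [← Finset.card_filter, Finset.filter_mem_eq_inter, Finset.univ_inter]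
    have hsum_univ_LT : ∑ i : Fin m, (L + if i ∈ T then 1 else 0) = m * L + T.card := by
      rw [Finset.sum_add_distrib, Finset.sum_const, Finset.card_univ, Fintype.card_fin,
        smul_eq_mul, hind T]
    have hsum_univ_LH : ∑ i : Fin m, (L + if i ∈ Hs then 1 else 0) = m * L + Hs.card := by
      rw [Finset.sum_add_distrib, Finset.sum_const, Finset.card_univ, Fintype.card_fin,
        smul_eq_mul, hind Hs]
    have hn : n = m * L + Hs.card := by
      rw [← hfib a, Finset.sum_congr rfl (fun i _ => hlptw i), hsum_univ_LH]
    -- step 1 : Hs.card + L ≤ T.card + load b (b j0)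
    have hstep1 : Hs.card + L ≤ T.card + load b (b j0) := by
      have e1 := Finset.add_sum_erase univ (load b) (Finset.mem_univ (b j0))
      have e2 : ∑ i ∈ univ.erase (b j0), load b i
          ≤ ∑ i ∈ univ.erase (b j0), (L + if i ∈ T then 1 else 0) := by
        apply Finset.sum_le_sum
        intro i _
        by_cases h : i ∈ T
        · rw [if_pos h]
          exact le_of_eq ((hmemT i).mp h)
        · rw [if_neg h]
          have h1 := hub i
          have h2 : ¬ (load b i = L + 1) := by rw [← hmemT]; exact h
          omega
      have e3 := Finset.add_sum_erase univ (fun i => L + if i ∈ T then 1 else 0)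
        (Finset.mem_univ (b j0))
      simp only [if_neg hbj0T] at e3
      have e4 := hfib b
      omega
    -- step 3 : sum of F1 over T
    have hsxT := Finset.sum_congr (rfl : T = T) (fun i hi => hF1 i)
    rw [Finset.sum_add_distrib, Finset.sum_add_distrib] at hsxT
    have hmuT : ∑ i ∈ T, load b i = L * T.card + T.card := by
      rw [Finset.sum_congr rfl (fun i hi => (hmemT i).mp hi), Finset.sum_const, smul_eq_mul]
      ring
    have hellT : ∑ i ∈ T, load a i = L * T.card + (T ∩ Hs).card := by
      rw [Finset.sum_congr rfl (fun i _ => hlptw i), Finset.sum_add_distrib,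
        Finset.sum_const, smul_eq_mul, ← Finset.card_filter, Finset.filter_mem_eq_inter]
      ring
    -- step 7 : arrivals into T come from Hs
    have hPQ : (c.filter (fun j => b j ∈ T)).card
          + (if a j0 ∈ Hs then 1 else 0) ≤ (c.filter (fun j => a j ∈ Hs)).card := by
      have hsub : c.filter (fun j => b j ∈ T) ⊆ c.filter (fun j => a j ∈ Hs) := by
        intro j hj
        obtain ⟨hjc, hjT⟩ := Finset.mem_filter.mp hj
        rw [Finset.mem_filter]
        refine ⟨hjc, ?_⟩
        rw [hmemH]
        have h1 := hF3 j hjc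
        have h2 := (hmemT _).mp hjT
        have h3 := hl2 (a j)
        omega
      have hj0P : j0 ∉ c.filter (fun j => b j ∈ T) := by
        rw [Finset.mem_filter]
        rintro ⟨-, hjT⟩
        exact hbj0T hjT
      by_cases h : a j0 ∈ Hs
      · rw [if_pos h]
        have hj0Q : j0 ∈ c.filter (fun j => a j ∈ Hs) := Finset.mem_filter.mpr ⟨hj0c, h⟩
        have := Finset.card_lt_card ((Finset.ssubset_iff_of_subset hsub).mpr ⟨j0, hj0Q, hj0P⟩)
        omega
      · rw [if_neg h]
        simpa using Finset.card_le_card hsub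
    -- fiberwise counts over subsets
    have hfib2 : ∀ (g : Fin n → Fin m) (S : Finset (Fin m)),
        (c.filter (fun j => g j ∈ S)).card = ∑ i ∈ S, (c.filter (fun j => g j = i)).card := by
      intro g S
      have h := Finset.card_eq_sum_card_fiberwise
        (s := c.filter (fun j => g j ∈ S)) (t := S) (f := g)
        (fun j hj => (Finset.mem_filter.mp hj).2)
      rw [h]
      apply Finset.sum_congr rfl
      intro i hi
      congr 1
      rw [Finset.filter_filter]
      ext j
      simp only [Finset.mem_filter]
      constructor
      · rintro ⟨h1, h2, h3⟩; exact ⟨h1, h3⟩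
      · rintro ⟨h1, h2⟩; exact ⟨h1, h2 ▸ hi, h2⟩
    -- A/B split
    have hcards1 := Finset.card_sdiff_add_card_inter T Hs
    have hcards2 := Finset.card_sdiff_add_card_inter Hs T
    have hinterc : (Hs ∩ T).card = (T ∩ Hs).card := by rw [Finset.inter_comm]
    have hsplitsum : ∀ (w : Fin m → ℕ) (U V : Finset (Fin m)),
        ∑ i ∈ U, w i = ∑ i ∈ U \ V, w i + ∑ i ∈ U ∩ V, w i := by
      intro w U V
      rw [← Finset.sum_filter_add_sum_filter_not U (fun i => i ∈ V)]
      rw [Finset.filter_mem_eq_inter]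
      have : U.filter (fun i => i ∉ V) = U \ V := (Finset.sdiff_eq_filter U V).symm
      rw [this]
      ring
    have hsxsplit := hsplitsum (fun i => (c.filter (fun j => a j = i)).card) T Hs
    have hsxsplit2 := hsplitsum (fun i => (c.filter (fun j => a j = i)).card) Hs T
    have hintersum : ∑ i ∈ Hs ∩ T, (c.filter (fun j => a j = i)).card
        = ∑ i ∈ T ∩ Hs, (c.filter (fun j => a j = i)).card := by
      rw [Finset.inter_comm]
    -- B.card ≤ A.card
    have hBA : (Hs \ T).card ≤ (T \ Hs).card := by omega
    have hsum4 : ∑ i ∈ Hs \ T, (c.filter (fun j => a j = i)).card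
        ≤ ∑ i ∈ T \ Hs, (c.filter (fun j => a j = i)).card + (Hs \ T).card :=
      sum_le_sum_add_card_aux _ _ _ _ hBA
        (fun i _ i' _ => hXB c hcC i i')
    -- if a j0 is low, strict improvement gives slack
    have hlow : a j0 ∉ Hs → load b (b j0) + 1 ≤ L := by
      intro h
      have h1 : load a (a j0) = L := by
        have := hlptw (a j0); rw [if_neg h] at this; omega
      omega
    have hyT := hfib2 b T
    have hxH := hfib2 a Hs
    by_cases hcase : a j0 ∈ Hs
    · rw [if_pos hcase] at hPQ
      omega
    · rw [if_neg hcase] at hPQ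
      have := hlow hcase
      omega
end

section
/- In a two-resource RSG where both resources are type 1, let a be a Nash equilibrium with |a_i| = q_i and |a_{i'}| = q_{i'} - 1 for the two resources i, i'. Then for any coalition c, a is c-stable if and only if: (C1) if |a_{i'} ∩ c| = 0 then |a_i ∩ c| ≤ 1; (C2) if β_i = β_{i'} and |a_{i'} ∩ c| > 0 then |a_i ∩ c| ≤ |a_{i'} ∩ c| + 1; (C3) if β_i < β_{i'} and |a_{i'} ∩ c| > 0 then |a_i ∩ c| ≤ |a_{i'} ∩ c|. -/
variable {N M : Type*}

open Finset

/-!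
Let `x` and `y` be the numbers of members of `c` on `i` and on `i'` at `a`. The loads always add
up to `q_i + q_{i'} - 1`, so a deviation of `c` in which nobody pays more than `α` either keeps
the loads of `a` or moves them to `(q_i - 1, q_{i'})`. The first cannot be profitable, since the
coalition's total cost would not drop. In the second, the `y + 1` members on `i'` pay `α` and so
came from `i`, while every member that was on `i'` now pays `β_i` on `i`. Such a deviation is
profitable iff `y + 1 ≤ x`, `β_i ≤ β_{i'}` when `y > 0`, and someone gains strictly: a member
staying on `i` (`x ≥ y + 2`) or one leaving `i'` (`y > 0` and `β_i < β_{i'}`). This is exactly the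
negation of C1 ∧ C2 ∧ C3.
-/

theorem fin_two_eq_or_eq_of_ne {i i' : Fin 2} (h : i ≠ i') (m : Fin 2) : m = i ∨ m = i' := by
  omega

section Loads

variable [Fintype N] [DecidableEq M]

theorem card_filter_le_load (a : N → M) (c : Finset N) (m : M) :
    #(c.filter (a · = m)) ≤ load a m :=
  card_le_card (filter_subset_filter _ (subset_univ c))

theorem load_add_card_filter_of_eqOn_compl [DecidableEq N] {a b : N → M} {c : Finset N}
    (hoff : ∀ j ∉ c, b j = a j) (m : M) :
    load b m + #(c.filter (a · = m)) = load a m + #(c.filter (b · = m)) := by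
  have split (x : N → M) : load x m = #(c.filter (x · = m)) + #(cᶜ.filter (x · = m)) := by
    rw [load, ← card_union_of_disjoint (disjoint_filter_filter disjoint_compl_right),
      ← filter_union, union_compl]
  have hout : cᶜ.filter (b · = m) = cᶜ.filter (a · = m) :=
    filter_congr fun j hj => by rw [hoff j (mem_compl.mp hj)]
  rw [split a, split b, hout]
  ring

theorem card_filter_le_of_forall_cost_le [DecidableEq N] {f : M → ℕ → ℕ} {a b : N → M}
    {c : Finset N} {m : M} {k : ℕ} (hmono : StrictMono (f m)) (hoff : ∀ j ∉ c, b j = a j)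
    (hweak : ∀ j ∈ c, cost f b j ≤ cost f a j) (hcost : ∀ j, cost f a j ≤ f m (load a m + k)) :
    #(c.filter (b · = m)) ≤ #(c.filter (a · = m)) + k := by
  have hload := load_add_card_filter_of_eqOn_compl hoff m
  obtain hempty | ⟨j, hj⟩ := (c.filter (b · = m)).eq_empty_or_nonempty
  · simp [hempty]
  obtain ⟨hjc, hjm⟩ := mem_filter.mp hj
  have hle : f m (load b m) ≤ f m (load a m + k) := by
    simpa only [cost, hjm] using (hweak j hjc).trans (hcost j)
  have := hmono.le_iff_le.mp hle
  omega

end Loads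

section Deviations

variable [Fintype N] [DecidableEq M]

def IsProfitableDeviation (f : M → ℕ → ℕ) (a : N → M) (c : Finset N) (b : N → M) : Prop :=
  (∀ j ∉ c, b j = a j) ∧ (∀ j ∈ c, cost f b j ≤ cost f a j) ∧ ∃ j ∈ c, cost f b j < cost f a j

theorem cStable_iff_not_exists_isProfitableDeviation [DecidableEq N] {f : M → ℕ → ℕ} {a : N → M}
    {c : Finset N} : cStable f a c ↔ ¬ ∃ b, IsProfitableDeviation f a c b :=
  Iff.rfl

theorem IsProfitableDeviation.sum_cost_lt {f : M → ℕ → ℕ} {a b : N → M} {c : Finset N}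
    (hb : IsProfitableDeviation f a c b) : ∑ j ∈ c, cost f b j < ∑ j ∈ c, cost f a j :=
  sum_lt_sum hb.2.1 hb.2.2

end Deviations

section Reassign

variable [DecidableEq N] {a : N → M} {c S : Finset N} {i i' : M} {j : N}

def reassign (a : N → M) (c S : Finset N) (i i' : M) : N → M :=
  fun j => if j ∈ S then i' else if j ∈ c then i else a j

theorem reassign_of_mem (hj : j ∈ S) : reassign a c S i i' j = i' :=
  if_pos hj

theorem reassign_of_mem_of_notMem (hjc : j ∈ c) (hjS : j ∉ S) : reassign a c S i i' j = i := by
  rw [reassign, if_neg hjS, if_pos hjc]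

theorem reassign_of_notMem (hSc : S ⊆ c) (hj : j ∉ c) : reassign a c S i i' j = a j := by
  rw [reassign, if_neg fun h => hj (hSc h), if_neg hj]

theorem filter_reassign_eq [DecidableEq M] (hii' : i ≠ i') (hSc : S ⊆ c) :
    c.filter (reassign a c S i i' · = i') = S := by
  ext j
  refine ⟨fun hj => ?_, fun hjS => mem_filter.mpr ⟨hSc hjS, reassign_of_mem hjS⟩⟩
  obtain ⟨hjc, hj'⟩ := mem_filter.mp hj
  by_contra hjS
  exact hii' ((reassign_of_mem_of_notMem hjc hjS).symm.trans hj')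

end Reassign

section TwoResources

variable {i i' : Fin 2}

theorem filter_not_eq_eq_filter_eq (hii' : i ≠ i') (b : N → Fin 2) (s : Finset N) :
    s.filter (¬ b · = i) = s.filter (b · = i') :=
  filter_congr fun j _ => by have := fin_two_eq_or_eq_of_ne hii' (b j); grind

theorem card_filter_add_card_filter_of_ne (hii' : i ≠ i') (b : N → Fin 2) (s : Finset N) :
    #(s.filter (b · = i)) + #(s.filter (b · = i')) = #s := by
  rw [← filter_not_eq_eq_filter_eq hii', card_filter_add_card_filter_not]

theorem sum_cost_eq_of_ne [Fintype N] (hii' : i ≠ i') (f : Fin 2 → ℕ → ℕ) (b : N → Fin 2)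
    (c : Finset N) :
    ∑ j ∈ c, cost f b j = #(c.filter (b · = i)) * f i (load b i)
      + #(c.filter (b · = i')) * f i' (load b i') := by
  rw [← sum_filter_add_sum_filter_not c (b · = i), filter_not_eq_eq_filter_eq hii']
  congr 1 <;> exact sum_const_nat fun j hj => by rw [cost, (mem_filter.mp hj).2]

end TwoResources

section TypeOneLoads

variable [Fintype N] {f : Fin 2 → ℕ → ℕ} {a b : N → Fin 2} {c : Finset N} {i i' : Fin 2} {α : ℕ}

theorem cost_le_of_type_one (hmono : StrictMono (f i')) (hii' : i ≠ i')
    (hα : f i (load a i) = α) (hα' : f i' (load a i' + 1) = α) (j : N) : cost f a j ≤ α := by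
  rcases fin_two_eq_or_eq_of_ne hii' (a j) with h | h
  · rw [cost, h, hα]
  · rw [cost, h, ← hα']
    exact (hmono (Nat.lt_succ_self _)).le

variable [DecidableEq N]

theorem IsProfitableDeviation.card_filter_eq_add_one (hmono : ∀ m, StrictMono (f m))
    (hii' : i ≠ i') (hα : f i (load a i) = α) (hα' : f i' (load a i' + 1) = α)
    (hb : IsProfitableDeviation f a c b) :
    #(c.filter (b · = i')) = #(c.filter (a · = i')) + 1 := by
  have hcost := cost_le_of_type_one (hmono i') hii' hα hα'
  have hle := card_filter_le_of_forall_cost_le (k := 0) (hmono i) hb.1 hb.2.1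
    (by rwa [add_zero, hα])
  have hle' := card_filter_le_of_forall_cost_le (k := 1) (hmono i') hb.1 hb.2.1 (by rwa [hα'])
  have hcard := card_filter_add_card_filter_of_ne hii' b c
  have hcard' := card_filter_add_card_filter_of_ne hii' a c
  have hload := load_add_card_filter_of_eqOn_compl hb.1 i
  have hload' := load_add_card_filter_of_eqOn_compl hb.1 i'
  by_contra hne
  -- Otherwise `b` has the loads of `a`, hence the same total cost on `c`.
  have hsum : ∑ j ∈ c, cost f b j = ∑ j ∈ c, cost f a j := by
    rw [sum_cost_eq_of_ne hii' f b, sum_cost_eq_of_ne hii' f a,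
      show load b i = load a i by omega, show load b i' = load a i' by omega,
      show #(c.filter (b · = i)) = #(c.filter (a · = i)) by omega,
      show #(c.filter (b · = i')) = #(c.filter (a · = i')) by omega]
  exact hb.sum_cost_lt.ne hsum

theorem IsProfitableDeviation.load_eq (hmono : ∀ m, StrictMono (f m))
    (hii' : i ≠ i') (hα : f i (load a i) = α) (hα' : f i' (load a i' + 1) = α)
    (hb : IsProfitableDeviation f a c b) :
    load b i' = load a i' + 1 ∧ load b i + 1 = load a i := by
  have hs' := hb.card_filter_eq_add_one hmono hii' hα hα'
  have hcard := card_filter_add_card_filter_of_ne hii' b c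
  have hcard' := card_filter_add_card_filter_of_ne hii' a c
  have hload := load_add_card_filter_of_eqOn_compl hb.1 i
  have hload' := load_add_card_filter_of_eqOn_compl hb.1 i'
  omega

theorem IsProfitableDeviation.apply_ne_of_apply_eq (hmono : ∀ m, StrictMono (f m))
    (hii' : i ≠ i') (hα : f i (load a i) = α) (hα' : f i' (load a i' + 1) = α)
    (hb : IsProfitableDeviation f a c b) {j : N} (hj : j ∈ c) (haj : a j = i') : b j ≠ i' := by
  intro hbj
  have hweak := hb.2.1 j hj
  rw [cost, cost, hbj, haj, (hb.load_eq hmono hii' hα hα').1] at hweak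
  exact (hmono i' (Nat.lt_succ_self _)).not_ge hweak

theorem IsProfitableDeviation.card_filter_conditions (hmono : ∀ m, StrictMono (f m))
    (hii' : i ≠ i') (hα : f i (load a i) = α) (hα' : f i' (load a i' + 1) = α)
    (hb : IsProfitableDeviation f a c b) :
    #(c.filter (a · = i')) + 1 ≤ #(c.filter (a · = i)) ∧
      (#(c.filter (a · = i')) = 0 ∨ f i (load a i - 1) ≤ f i' (load a i')) ∧
      (#(c.filter (a · = i')) + 2 ≤ #(c.filter (a · = i)) ∨
        0 < #(c.filter (a · = i')) ∧ f i (load a i - 1) < f i' (load a i')) := by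
  obtain ⟨hload', hload⟩ := hb.load_eq hmono hii' hα hα'
  have hs' := hb.card_filter_eq_add_one hmono hii' hα hα'
  have hcard := card_filter_add_card_filter_of_ne hii' b c
  have hcard' := card_filter_add_card_filter_of_ne hii' a c
  have hsum := hb.sum_cost_lt
  rw [sum_cost_eq_of_ne hii' f b, sum_cost_eq_of_ne hii' f a, hload', hα', hα,
    show load b i = load a i - 1 by omega] at hsum
  set x := #(c.filter (a · = i))
  set y := #(c.filter (a · = i'))
  have hcost_b {j : N} (hj : j ∈ c) (haj : a j = i') : cost f b j = f i (load a i - 1) := by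
    have hbj := (fin_two_eq_or_eq_of_ne hii' (b j)).resolve_right
      (hb.apply_ne_of_apply_eq hmono hii' hα hα' hj haj)
    rw [cost, hbj, ← hload, Nat.add_sub_cancel]
  have hxy : y + 1 ≤ x := hs' ▸ card_le_card fun j hj => by
    obtain ⟨hjc, hbj⟩ := mem_filter.mp hj
    refine mem_filter.mpr ⟨hjc, (fin_two_eq_or_eq_of_ne hii' (a j)).resolve_right fun haj => ?_⟩
    exact hb.apply_ne_of_apply_eq hmono hii' hα hα' hjc haj hbj
  refine ⟨hxy, ?_, ?_⟩
  · refine y.eq_zero_or_pos.imp_right fun hy => ?_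
    obtain ⟨j, hj⟩ := card_pos.mp hy
    obtain ⟨hjc, haj⟩ := mem_filter.mp hj
    have hweak := hb.2.1 j hjc
    rwa [hcost_b hjc haj, cost, haj] at hweak
  · by_contra! h
    rw [hs', show #(c.filter (b · = i)) = y by omega, show x = y + 1 by omega] at hsum
    have hlt : y * f i (load a i - 1) < y * f i' (load a i') := by linarith
    exact (h.2 (Nat.pos_of_ne_zero fun hy => by simp [hy] at hlt)).not_gt
      (Nat.lt_of_mul_lt_mul_left hlt)


theorem load_reassign (hii' : i ≠ i') {S : Finset N} (hSsub : S ⊆ c.filter (a · = i))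
    (hScard : #S = #(c.filter (a · = i')) + 1) :
    load (reassign a c S i i') i' = load a i' + 1 ∧
      load (reassign a c S i i') i = load a i - 1 := by
  have hSc : S ⊆ c := hSsub.trans (filter_subset _ c)
  have hoff : ∀ j ∉ c, reassign a c S i i' j = a j := fun j => reassign_of_notMem hSc
  have hcard := card_filter_add_card_filter_of_ne hii' (reassign a c S i i') c
  have hcard' := card_filter_add_card_filter_of_ne hii' a c
  have hload := load_add_card_filter_of_eqOn_compl hoff i
  have hload' := load_add_card_filter_of_eqOn_compl hoff i'
  have hxa := card_filter_le_load a c i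
  rw [filter_reassign_eq hii' hSc, hScard] at hload' hcard
  omega

theorem exists_isProfitableDeviation (hmono : ∀ m, StrictMono (f m)) (hii' : i ≠ i')
    (hα : f i (load a i) = α) (hα' : f i' (load a i' + 1) = α)
    (hxy : #(c.filter (a · = i')) + 1 ≤ #(c.filter (a · = i)))
    (hβ : #(c.filter (a · = i')) = 0 ∨ f i (load a i - 1) ≤ f i' (load a i'))
    (hstrict : #(c.filter (a · = i')) + 2 ≤ #(c.filter (a · = i)) ∨
        0 < #(c.filter (a · = i')) ∧ f i (load a i - 1) < f i' (load a i')) :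
    ∃ b, IsProfitableDeviation f a c b := by
  obtain ⟨S, hSsub, hScard⟩ := exists_subset_card_eq hxy
  have hS {j : N} (hj : j ∈ S) : j ∈ c ∧ a j = i := mem_filter.mp (hSsub hj)
  obtain ⟨hload', hload⟩ := load_reassign hii' hSsub hScard
  have hcost_S {j : N} (hj : j ∈ S) : cost f (reassign a c S i i') j = cost f a j := by
    rw [cost, cost, reassign_of_mem hj, (hS hj).2, hload', hα', hα]
  have hcost_rest {j : N} (hjc : j ∈ c) (hjS : j ∉ S) :
      cost f (reassign a c S i i') j = f i (load a i - 1) := by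
    rw [cost, reassign_of_mem_of_notMem hjc hjS, hload]
  have hβα : f i (load a i - 1) < α := by
    have := card_filter_le_load a c i
    exact hα ▸ hmono i (by omega)
  refine ⟨reassign a c S i i', fun j => reassign_of_notMem fun j hj => (hS hj).1,
    fun j hj => ?_, ?_⟩
  · by_cases hjS : j ∈ S
    · exact (hcost_S hjS).le
    rw [hcost_rest hj hjS]
    rcases fin_two_eq_or_eq_of_ne hii' (a j) with haj | haj
    · rw [cost, haj, hα]
      exact hβα.le
    · rw [cost, haj]
      exact hβ.resolve_left (card_pos.mpr ⟨j, mem_filter.mpr ⟨hj, haj⟩⟩).ne'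
  · rcases hstrict with hx | ⟨hy, hlt⟩
    · obtain ⟨j, hj⟩ : ((c.filter (a · = i)) \ S).Nonempty := by
        rw [← card_pos, card_sdiff_of_subset hSsub]
        omega
      obtain ⟨hjf, hjS⟩ := mem_sdiff.mp hj
      obtain ⟨hjc, haj⟩ := mem_filter.mp hjf
      exact ⟨j, hjc, by rwa [hcost_rest hjc hjS, cost, haj, hα]⟩
    · obtain ⟨j, hj⟩ := card_pos.mp hy
      obtain ⟨hjc, haj⟩ := mem_filter.mp hj
      have hjS : j ∉ S := fun h => hii' ((hS h).2.symm.trans haj)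
      exact ⟨j, hjc, by rwa [hcost_rest hjc hjS, cost, haj]⟩

end TypeOneLoads

theorem exists_isProfitableDeviation_iff [Fintype N] [DecidableEq N] {f : Fin 2 → ℕ → ℕ}
    {a : N → Fin 2} {c : Finset N} {i i' : Fin 2} {α : ℕ} (hmono : ∀ m, StrictMono (f m))
    (hii' : i ≠ i') (hα : f i (load a i) = α) (hα' : f i' (load a i' + 1) = α) :
    (∃ b, IsProfitableDeviation f a c b) ↔
      #(c.filter (a · = i')) + 1 ≤ #(c.filter (a · = i)) ∧
      (#(c.filter (a · = i')) = 0 ∨ f i (load a i - 1) ≤ f i' (load a i')) ∧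
      (#(c.filter (a · = i')) + 2 ≤ #(c.filter (a · = i)) ∨
        0 < #(c.filter (a · = i')) ∧ f i (load a i - 1) < f i' (load a i')) :=
  ⟨fun ⟨_, hb⟩ => hb.card_filter_conditions hmono hii' hα hα',
    fun ⟨hxy, hβ, hstrict⟩ => exists_isProfitableDeviation hmono hii' hα hα' hxy hβ hstrict⟩

theorem two_resource_stability_characterization_general [Fintype N] [DecidableEq N]
    (f : Fin 2 → ℕ → ℕ) (hmono : ∀ i, StrictMono (f i)) (hzero : ∀ i, f i 0 = 0)
    (htype1 : ∀ i : Fin 2,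
      f i (quota f (minmax N f) i) = minmax N f)
    (i i' : Fin 2) (hii' : i ≠ i')
    (a : N → Fin 2)
    (hi : load a i = quota f (minmax N f) i)
    (hi' : load a i' = quota f (minmax N f) i' - 1)
    (c : Finset N) :
    cStable f a c ↔
      (((c.filter (fun j => a j = i')).card = 0 →
          (c.filter (fun j => a j = i)).card ≤ 1) ∧
       (f i (quota f (minmax N f) i - 1) = f i' (quota f (minmax N f) i' - 1) →
          0 < (c.filter (fun j => a j = i')).card →
          (c.filter (fun j => a j = i)).card ≤ (c.filter (fun j => a j = i')).card + 1) ∧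
       (f i (quota f (minmax N f) i - 1) < f i' (quota f (minmax N f) i' - 1) →
          0 < (c.filter (fun j => a j = i')).card →
          (c.filter (fun j => a j = i)).card ≤ (c.filter (fun j => a j = i')).card)) := by
  obtain hq' | hq' := Nat.eq_zero_or_pos (quota f (minmax N f) i')
  · -- Then `α = 0`, so both quotas vanish and `c` has no members.
    have hq : quota f (minmax N f) i = 0 :=
      (hmono i).injective (by rw [htype1, ← htype1 i', hq', hzero, hzero])
    have hc : c = ∅ := by
      have := card_filter_add_card_filter_of_ne hii' a c
      have := card_filter_le_load a c i
      have := card_filter_le_load a c i'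
      rw [← card_eq_zero]
      omega
    simp [hc, cStable]
  · rw [cStable_iff_not_exists_isProfitableDeviation,
      exists_isProfitableDeviation_iff hmono hii' (hi ▸ htype1 i)
        (by rw [hi', Nat.sub_add_cancel hq', htype1]), hi, hi']
    omega

/-- In a two-resource RSG with both resources of type 1, at a Nash equilibrium `a` with
`|a_i| = q_i` and `|a_{i'}| = q_{i'} - 1`, coalition `c` has no profitable deviation iff
conditions C1, C2, C3 hold. -/
theorem two_resource_stability_characterization [Fintype N] [DecidableEq N]
    (f : Fin 2 → ℕ → ℕ) (hmono : ∀ i, StrictMono (f i)) (hzero : ∀ i, f i 0 = 0)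
    (htype1 : ∀ i : Fin 2,
      f i (quota f (minmax N f) i) = minmax N f)
    (i i' : Fin 2) (hii' : i ≠ i')
    (a : N → Fin 2) (hNash : Nash f a)
    (hi : load a i = quota f (minmax N f) i)
    (hi' : load a i' = quota f (minmax N f) i' - 1)
    (c : Finset N) :
    cStable f a c ↔
      (((c.filter (fun j => a j = i')).card = 0 →
          (c.filter (fun j => a j = i)).card ≤ 1) ∧
       (f i (quota f (minmax N f) i - 1) = f i' (quota f (minmax N f) i' - 1) →
          0 < (c.filter (fun j => a j = i')).card →
          (c.filter (fun j => a j = i)).card ≤ (c.filter (fun j => a j = i')).card + 1) ∧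
       (f i (quota f (minmax N f) i - 1) < f i' (quota f (minmax N f) i' - 1) →
          0 < (c.filter (fun j => a j = i')).card →
          (c.filter (fun j => a j = i)).card ≤ (c.filter (fun j => a j = i')).card)) :=
  two_resource_stability_characterization_general f hmono hzero htype1 i i' hii' a hi hi' c
end

section
/- In a two-resource RSG, for every laminar coalition structure C there exists a C-stable allocation; that is, a laminar equilibrium always exists in RSGs with two resources. -/
variable {N M : Type*}

section Helpers
open Finset
set_option linter.unusedSectionVars false
variable [Fintype N] [DecidableEq N]





lemma fin2_cases (x : Fin 2) : x = 0 ∨ x = 1 := by omega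

lemma load_add (a : N → Fin 2) : load a 0 + load a 1 = Fintype.card N := by
  classical
  have h := Finset.card_filter_add_card_filter_not (s := (univ : Finset N))
    (p := fun j => a j = 0)
  have h2 : (univ.filter (fun j => ¬ a j = 0)) = univ.filter (fun j => a j = 1) := by
    apply Finset.filter_congr
    intro j _
    rcases fin2_cases (a j) with h | h <;> simp [h]
  rw [h2] at h
  simpa [load, Finset.card_univ] using h

lemma switch_count (a b : N → Fin 2) :
    load b 0 + (Finset.univ.filter (fun j => a j = 0 ∧ b j = 1)).card
      = load a 0 + (Finset.univ.filter (fun j => a j = 1 ∧ b j = 0)).card := by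
  classical
  have hb := (Finset.card_filter_add_card_filter_not
    (s := univ.filter (fun j => b j = 0)) (p := fun j => a j = 0)).symm
  have ha := (Finset.card_filter_add_card_filter_not
    (s := univ.filter (fun j => a j = 0)) (p := fun j => b j = 0)).symm
  rw [Finset.filter_filter, Finset.filter_filter] at hb ha
  have e1 : (univ.filter (fun j => b j = 0 ∧ a j = 0)) = univ.filter (fun j => a j = 0 ∧ b j = 0) := by
    apply Finset.filter_congr; intro j _; exact and_comm
  have e2 : (univ.filter (fun j => b j = 0 ∧ ¬ a j = 0)) = univ.filter (fun j => a j = 1 ∧ b j = 0) := by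
    apply Finset.filter_congr; intro j _
    rcases fin2_cases (a j) with h | h <;> simp [h, and_comm]
  have e3 : (univ.filter (fun j => a j = 0 ∧ ¬ b j = 0)) = univ.filter (fun j => a j = 0 ∧ b j = 1) := by
    apply Finset.filter_congr; intro j _
    rcases fin2_cases (b j) with h | h <;> simp [h]
  rw [e1, e2] at hb
  rw [e3] at ha
  unfold load
  omega

lemma load_alloc (S : Finset N) :
    load (fun j => if j ∈ S then (0 : Fin 2) else 1) 0 = S.card := by
  unfold load
  congr 1
  ext j
  by_cases h : j ∈ S <;> simp [h]

lemma filter0_alloc (S c : Finset N) :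
    c.filter (fun j => (if j ∈ S then (0 : Fin 2) else 1) = 0) = c ∩ S := by
  ext j
  by_cases h : j ∈ S <;> simp [h]

lemma filter1_alloc (S c : Finset N) :
    c.filter (fun j => (if j ∈ S then (0 : Fin 2) else 1) = 1) = c \ S := by
  ext j
  by_cases h : j ∈ S <;> simp [h]









lemma master {f : Fin 2 → ℕ → ℕ} (hmono : ∀ i, StrictMono (f i))
    (a : N → Fin 2) (c : Finset N)
    {n k s t : ℕ} (hn : n = Fintype.card N) (hk : k = load a 0)
    (hs : s = (c.filter (fun j => a j = 0)).card)
    (ht : t = (c.filter (fun j => a j = 1)).card)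
    (Hu : f 1 (n - k) ≤ f 0 (k + 1))
    (Hd : f 0 k ≤ f 1 (n - k + 1))
    (SU : f 0 (k + 1) = f 1 (n - k) →
      ¬ (s + 1 ≤ t ∧ (1 ≤ s → f 1 (n - k - 1) ≤ f 0 k) ∧
        (s + 2 ≤ t ∨ (1 ≤ s ∧ f 1 (n - k - 1) < f 0 k))))
    (SD : f 0 k = f 1 (n - k + 1) →
      ¬ (t + 1 ≤ s ∧ (1 ≤ t → f 0 (k - 1) ≤ f 1 (n - k)) ∧
        (t + 2 ≤ s ∨ (1 ≤ t ∧ f 0 (k - 1) < f 1 (n - k))))) :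
    cStable f a c := by
  rintro ⟨b, hout, hle, j0, hj0c, hj0lt⟩
  have hla := load_add a
  have hlb := load_add b
  set k' := load b 0 with hk'
  have hkn : k ≤ n := by omega
  have hk'n : k' ≤ n := by omega
  have hla1 : load a 1 = n - k := by omega
  have hlb1 : load b 1 = n - k' := by omega
  have ca0 : ∀ j, a j = 0 → cost f a j = f 0 k := by
    intro j h; simp [cost, h, ← hk]
  have ca1 : ∀ j, a j = 1 → cost f a j = f 1 (n - k) := by
    intro j h; simp [cost, h, hla1]
  have cb0 : ∀ j, b j = 0 → cost f b j = f 0 k' := by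
    intro j h; simp [cost, h, ← hk']
  have cb1 : ∀ j, b j = 1 → cost f b j = f 1 (n - k') := by
    intro j h; simp [cost, h, hlb1]
  set P := univ.filter (fun j => a j = 0 ∧ b j = 1) with hP
  set Q := univ.filter (fun j => a j = 1 ∧ b j = 0) with hQ
  have key : k' + P.card = k + Q.card := by
    have := switch_count a b
    rw [← hk, ← hk', ← hP, ← hQ] at this
    omega
  have hmemc : ∀ j, b j ≠ a j → j ∈ c := by
    intro j hne
    by_contra hc
    exact hne (hout j hc)
  have hPmem : ∀ j ∈ P, j ∈ c ∧ a j = 0 ∧ b j = 1 := by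
    intro j hj
    rw [hP, Finset.mem_filter] at hj
    refine ⟨hmemc j ?_, hj.2⟩
    rw [hj.2.1, hj.2.2]; decide
  have hQmem : ∀ j ∈ Q, j ∈ c ∧ a j = 1 ∧ b j = 0 := by
    intro j hj
    rw [hQ, Finset.mem_filter] at hj
    refine ⟨hmemc j ?_, hj.2⟩
    rw [hj.2.1, hj.2.2]; decide
  have hPle : ∀ j ∈ P, f 1 (n - k') ≤ f 0 k := by
    intro j hj
    obtain ⟨hc, h0, h1⟩ := hPmem j hj
    have := hle j hc
    rwa [ca0 j h0, cb1 j h1] at this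
  have hQle : ∀ j ∈ Q, f 0 k' ≤ f 1 (n - k) := by
    intro j hj
    obtain ⟨hc, h1, h0⟩ := hQmem j hj
    have := hle j hc
    rwa [ca1 j h1, cb0 j h0] at this
  have hPsub : P ⊆ c.filter (fun j => a j = 0) := by
    intro j hj
    obtain ⟨hc, h0, _⟩ := hPmem j hj
    exact Finset.mem_filter.mpr ⟨hc, h0⟩
  have hQsub : Q ⊆ c.filter (fun j => a j = 1) := by
    intro j hj
    obtain ⟨hc, h1, _⟩ := hQmem j hj
    exact Finset.mem_filter.mpr ⟨hc, h1⟩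
  rcases lt_trichotomy k' k with hlt | heqk | hgt
  · -- downward deviation: k' < k
    obtain ⟨jp, hjp⟩ := Finset.card_pos.mp (show 0 < P.card by omega)
    have h1 : f 1 (n - k') ≤ f 0 k := hPle jp hjp
    have hnk' : n - k' = n - k + 1 := by
      by_contra hne
      have : f 1 (n - k + 1) < f 1 (n - k') := hmono 1 (by omega)
      omega
    have hk'1 : k' = k - 1 := by omega
    rw [hnk'] at h1
    have heq : f 0 k = f 1 (n - k + 1) := le_antisymm Hd h1
    apply SD heq
    have hstay1 : ∀ j ∈ c, a j = 1 → b j = 0 := by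
      intro j hj h1j
      rcases fin2_cases (b j) with hb0 | hb1
      · exact hb0
      · exfalso
        have := hle j hj
        rw [ca1 j h1j, cb1 j hb1, hnk'] at this
        have : f 1 (n - k) < f 1 (n - k + 1) := hmono 1 (by omega)
        omega
    have hQeq : c.filter (fun j => a j = 1) ⊆ Q := by
      intro j hj
      rw [Finset.mem_filter] at hj
      exact Finset.mem_filter.mpr ⟨Finset.mem_univ j, hj.2, hstay1 j hj.1 hj.2⟩
    have hqt : Q.card = t := le_antisymm (by rw [ht]; exact Finset.card_le_card hQsub)
      (by rw [ht]; exact Finset.card_le_card hQeq)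
    have hps : P.card ≤ s := by rw [hs]; exact Finset.card_le_card hPsub
    have hts : t + 1 ≤ s := by omega
    refine ⟨hts, ?_, ?_⟩
    · intro h1t
      obtain ⟨jq, hjq⟩ := Finset.card_pos.mp (show 0 < Q.card by omega)
      have := hQle jq hjq
      rwa [hk'1] at this
    · rcases fin2_cases (a j0) with ha0 | ha1
      · rcases fin2_cases (b j0) with hb0 | hb1
        · -- 0-stayer in c: s ≥ p + 1 = t + 2
          have hj0P : j0 ∉ P := by
            rw [hP, Finset.mem_filter]
            rintro ⟨-, -, h⟩
            rw [hb0] at h; exact absurd h (by decide)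
          have hj0f : j0 ∈ c.filter (fun j => a j = 0) := Finset.mem_filter.mpr ⟨hj0c, ha0⟩
          have hins : insert j0 P ⊆ c.filter (fun j => a j = 0) := by
            intro x hx
            rcases Finset.mem_insert.mp hx with rfl | hx
            · exact hj0f
            · exact hPsub hx
          have : P.card + 1 ≤ s := by
            rw [hs]
            calc P.card + 1 = (insert j0 P).card := (Finset.card_insert_of_notMem hj0P).symm
              _ ≤ _ := Finset.card_le_card hins
          left; omega
        · exfalso
          rw [ca0 j0 ha0, cb1 j0 hb1, hnk'] at hj0lt
          omega
      · have hb0 : b j0 = 0 := hstay1 j0 hj0c ha1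
        rw [ca1 j0 ha1, cb0 j0 hb0, hk'1] at hj0lt
        have ht1 : 1 ≤ t := by
          rw [ht]
          exact Finset.card_pos.mpr ⟨j0, Finset.mem_filter.mpr ⟨hj0c, ha1⟩⟩
        right; exact ⟨ht1, hj0lt⟩
  · -- k' = k
    rcases Nat.eq_zero_or_pos P.card with hp0 | hp1
    · have hq0 : Q.card = 0 := by omega
      have hba : ∀ j, b j = a j := by
        intro j
        by_contra hne
        rcases fin2_cases (a j) with h0 | h1
        · have : j ∈ P := by
            rw [hP, Finset.mem_filter]
            rcases fin2_cases (b j) with hb0 | hb1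
            · exact absurd (hb0.trans h0.symm) hne
            · exact ⟨Finset.mem_univ j, h0, hb1⟩
          rw [Finset.card_eq_zero.mp hp0] at this
          exact absurd this (Finset.notMem_empty j)
        · have : j ∈ Q := by
            rw [hQ, Finset.mem_filter]
            rcases fin2_cases (b j) with hb0 | hb1
            · exact ⟨Finset.mem_univ j, h1, hb0⟩
            · exact absurd (hb1.trans h1.symm) hne
          rw [Finset.card_eq_zero.mp hq0] at this
          exact absurd this (Finset.notMem_empty j)
      have : cost f b j0 = cost f a j0 := by rw [funext hba]
      omega
    · obtain ⟨jp, hjp⟩ := Finset.card_pos.mp hp1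
      obtain ⟨jq, hjq⟩ := Finset.card_pos.mp (show 0 < Q.card by omega)
      have h1 := hPle jp hjp
      have h2 := hQle jq hjq
      rw [heqk] at h1 h2
      have heq : f 0 k = f 1 (n - k) := le_antisymm h2 h1
      -- all costs equal
      rcases fin2_cases (a j0) with ha0 | ha1 <;> rcases fin2_cases (b j0) with hb0 | hb1
      · rw [ca0 j0 ha0, cb0 j0 hb0, heqk] at hj0lt; omega
      · rw [ca0 j0 ha0, cb1 j0 hb1, heqk] at hj0lt; omega
      · rw [ca1 j0 ha1, cb0 j0 hb0, heqk] at hj0lt; omega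
      · rw [ca1 j0 ha1, cb1 j0 hb1, heqk] at hj0lt; omega
  · -- upward deviation: k < k'
    obtain ⟨jq, hjq⟩ := Finset.card_pos.mp (show 0 < Q.card by omega)
    have h1 : f 0 k' ≤ f 1 (n - k) := hQle jq hjq
    have hk'1 : k' = k + 1 := by
      by_contra hne
      have : f 0 (k + 1) < f 0 k' := hmono 0 (by omega)
      omega
    rw [hk'1] at h1
    have heq : f 0 (k + 1) = f 1 (n - k) := le_antisymm h1 Hu
    apply SU heq
    have hnk' : n - k' = n - k - 1 := by omega
    have hstay0 : ∀ j ∈ c, a j = 0 → b j = 1 := by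
      intro j hj h0j
      rcases fin2_cases (b j) with hb0 | hb1
      · exfalso
        have := hle j hj
        rw [ca0 j h0j, cb0 j hb0, hk'1] at this
        have : f 0 k < f 0 (k + 1) := hmono 0 (by omega)
        omega
      · exact hb1
    have hPeq : c.filter (fun j => a j = 0) ⊆ P := by
      intro j hj
      rw [Finset.mem_filter] at hj
      exact Finset.mem_filter.mpr ⟨Finset.mem_univ j, hj.2, hstay0 j hj.1 hj.2⟩
    have hps : P.card = s := le_antisymm (by rw [hs]; exact Finset.card_le_card hPsub)
      (by rw [hs]; exact Finset.card_le_card hPeq)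
    have hqt : Q.card ≤ t := by rw [ht]; exact Finset.card_le_card hQsub
    have hst : s + 1 ≤ t := by omega
    refine ⟨hst, ?_, ?_⟩
    · intro h1s
      obtain ⟨jp, hjp⟩ := Finset.card_pos.mp (show 0 < P.card by omega)
      have := hPle jp hjp
      rwa [hnk'] at this
    · rcases fin2_cases (a j0) with ha0 | ha1
      · have hb1 : b j0 = 1 := hstay0 j0 hj0c ha0
        rw [ca0 j0 ha0, cb1 j0 hb1, hnk'] at hj0lt
        have hs1 : 1 ≤ s := by
          rw [hs]
          exact Finset.card_pos.mpr ⟨j0, Finset.mem_filter.mpr ⟨hj0c, ha0⟩⟩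
        right; exact ⟨hs1, hj0lt⟩
      · rcases fin2_cases (b j0) with hb0 | hb1
        · exfalso
          rw [ca1 j0 ha1, cb0 j0 hb0, hk'1] at hj0lt
          omega
        · have hj0Q : j0 ∉ Q := by
            rw [hQ, Finset.mem_filter]
            rintro ⟨-, -, h⟩
            rw [hb1] at h; exact absurd h (by decide)
          have hj0f : j0 ∈ c.filter (fun j => a j = 1) := Finset.mem_filter.mpr ⟨hj0c, ha1⟩
          have hins : insert j0 Q ⊆ c.filter (fun j => a j = 1) := by
            intro x hx
            rcases Finset.mem_insert.mp hx with rfl | hx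
            · exact hj0f
            · exact hQsub hx
          have : Q.card + 1 ≤ t := by
            rw [ht]
            calc Q.card + 1 = (insert j0 Q).card := (Finset.card_insert_of_notMem hj0Q).symm
              _ ≤ _ := Finset.card_le_card hins
          left; omega






/-- balanced selection within a laminar family -/
lemma Qlem : ∀ (D : Finset (Finset N)) (X : Finset N),
    (∀ c1 ∈ D, ∀ c2 ∈ D, (c1 ∩ c2).Nonempty → c1 ⊆ c2 ∨ c2 ⊆ c1) →
    (∀ c ∈ D, c ⊆ X) → ∀ m, m ≤ (X.card + 1) / 2 →
    ∃ S ⊆ X, S.card = m ∧ ∀ c ∈ D, (S ∩ c).card ≤ (c.card + 1) / 2 := by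
  intro D
  induction D using Finset.strongInductionOn with
  | _ D IH =>
    intro X hlam hsub m hm
    rcases D.eq_empty_or_nonempty with rfl | hne
    · obtain ⟨S, hS, hScard⟩ := Finset.exists_subset_card_eq (show m ≤ X.card by omega)
      exact ⟨S, hS, hScard, by simp⟩
    · obtain ⟨c1, hc1D, hc1max⟩ := Finset.exists_max_image D (fun c => c.card) hne
      set D1 := (D.erase c1).filter (fun c => c ⊆ c1) with hD1
      set D2 := (D.erase c1).filter (fun c => ¬ c ⊆ c1) with hD2
      have hD1ss : D1 ⊂ D := by
        refine Finset.ssubset_iff_of_subset ?_ |>.mpr ⟨c1, hc1D, ?_⟩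
        · exact (Finset.filter_subset _ _).trans (Finset.erase_subset _ _)
        · rw [hD1]
          intro h
          exact (Finset.mem_erase.mp (Finset.mem_filter.mp h).1).1 rfl
      have hD2ss : D2 ⊂ D := by
        refine Finset.ssubset_iff_of_subset ?_ |>.mpr ⟨c1, hc1D, ?_⟩
        · exact (Finset.filter_subset _ _).trans (Finset.erase_subset _ _)
        · rw [hD2]
          intro h
          exact (Finset.mem_erase.mp (Finset.mem_filter.mp h).1).1 rfl
      have hD2disj : ∀ c ∈ D2, c ∩ c1 = ∅ := by
        intro c hc
        rw [hD2, Finset.mem_filter, Finset.mem_erase] at hc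
        obtain ⟨⟨hne1, hcD⟩, hnsub⟩ := hc
        by_contra hns
        rcases hlam c hcD c1 hc1D (Finset.nonempty_iff_ne_empty.mpr hns) with h | h
        · exact hnsub h
        · exact hne1 (Finset.eq_of_subset_of_card_le h (hc1max c hcD)).symm
      have hc1X : c1 ⊆ X := hsub c1 hc1D
      set m1 := min m ((c1.card + 1) / 2) with hm1
      obtain ⟨S1, hS1sub, hS1card, hS1⟩ := IH D1 hD1ss c1
        (fun a ha b hb => hlam a (Finset.mem_of_mem_erase (Finset.mem_of_mem_filter a ha))
          b (Finset.mem_of_mem_erase (Finset.mem_of_mem_filter b hb)))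
        (fun c hc => (Finset.mem_filter.mp hc).2) m1 (by omega)
      have hc1Xcard : c1.card ≤ X.card := Finset.card_le_card hc1X
      have hXd : (X \ c1).card = X.card - c1.card := Finset.card_sdiff_of_subset hc1X
      obtain ⟨S2, hS2sub, hS2card, hS2⟩ := IH D2 hD2ss (X \ c1)
        (fun a ha b hb => hlam a (Finset.mem_of_mem_erase (Finset.mem_of_mem_filter a ha))
          b (Finset.mem_of_mem_erase (Finset.mem_of_mem_filter b hb)))
        (fun c hc => by
          intro x hx
          rw [Finset.mem_sdiff]
          refine ⟨hsub c (Finset.mem_of_mem_erase (Finset.mem_of_mem_filter c hc)) hx, ?_⟩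
          intro hx1
          have := hD2disj c hc
          have : x ∈ c ∩ c1 := Finset.mem_inter.mpr ⟨hx, hx1⟩
          simp_all)
        (m - m1) (by omega)
      have hdisj : Disjoint S1 S2 := by
        apply Finset.disjoint_left.mpr
        intro x hx1 hx2
        exact (Finset.mem_sdiff.mp (hS2sub hx2)).2 (hS1sub hx1)
      refine ⟨S1 ∪ S2, ?_, ?_, ?_⟩
      · exact Finset.union_subset (hS1sub.trans hc1X) (hS2sub.trans (Finset.sdiff_subset))
      · rw [Finset.card_union_of_disjoint hdisj]; omega
      · intro c hcD
        have hS2c1 : S2 ∩ c1 = ∅ := by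
          rw [← Finset.disjoint_iff_inter_eq_empty, Finset.disjoint_left]
          intro x hx
          exact (Finset.mem_sdiff.mp (hS2sub hx)).2
        rw [Finset.union_inter_distrib_right]
        by_cases hcc : c = c1
        · subst hcc
          have e1 : S1 ∩ c = S1 := Finset.inter_eq_left.mpr hS1sub
          rw [e1, hS2c1, Finset.union_empty]
          omega
        · have hcer : c ∈ D.erase c1 := Finset.mem_erase.mpr ⟨hcc, hcD⟩
          by_cases hsc : c ⊆ c1
          · have hcD1 : c ∈ D1 := Finset.mem_filter.mpr ⟨hcer, hsc⟩
            have e2 : S2 ∩ c = ∅ := by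
              rw [← Finset.disjoint_iff_inter_eq_empty, Finset.disjoint_left]
              intro x hx hxc
              have : x ∈ S2 ∩ c1 := Finset.mem_inter.mpr ⟨hx, hsc hxc⟩
              simp [hS2c1] at this
            rw [e2, Finset.union_empty]
            exact hS1 c hcD1
          · have hcD2 : c ∈ D2 := Finset.mem_filter.mpr ⟨hcer, hsc⟩
            have e3 : S1 ∩ c = ∅ := by
              rw [← Finset.disjoint_iff_inter_eq_empty, Finset.disjoint_left]
              intro x hx hxc
              have : x ∈ c ∩ c1 := Finset.mem_inter.mpr ⟨hxc, hS1sub hx⟩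
              simp [hD2disj c hcD2] at this
            rw [e3, Finset.empty_union]
            exact hS2 c hcD2

/-- hitting set lemma for laminar families of sets of size ≥ 2 -/
lemma Hlem : ∀ (D : Finset (Finset N)) (X : Finset N),
    (∀ c1 ∈ D, ∀ c2 ∈ D, (c1 ∩ c2).Nonempty → c1 ⊆ c2 ∨ c2 ⊆ c1) →
    (∀ c ∈ D, c ⊆ X) → (∀ c ∈ D, 2 ≤ c.card) →
    ∃ E ⊆ X, 2 * E.card ≤ X.card ∧ ∀ c ∈ D, (E ∩ c).Nonempty ∧ 2 * (E ∩ c).card ≤ c.card := by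
  intro D
  induction D using Finset.strongInductionOn with
  | _ D IH =>
    intro X hlam hsub hbig
    rcases D.eq_empty_or_nonempty with rfl | hne
    · exact ⟨∅, Finset.empty_subset X, by simp, by simp⟩
    · obtain ⟨c1, hc1D, hc1max⟩ := Finset.exists_max_image D (fun c => c.card) hne
      set D1 := (D.erase c1).filter (fun c => c ⊆ c1) with hD1
      set D2 := (D.erase c1).filter (fun c => ¬ c ⊆ c1) with hD2
      have hD1ss : D1 ⊂ D := by
        refine Finset.ssubset_iff_of_subset ?_ |>.mpr ⟨c1, hc1D, ?_⟩
        · exact (Finset.filter_subset _ _).trans (Finset.erase_subset _ _)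
        · rw [hD1]
          intro h
          exact (Finset.mem_erase.mp (Finset.mem_filter.mp h).1).1 rfl
      have hD2ss : D2 ⊂ D := by
        refine Finset.ssubset_iff_of_subset ?_ |>.mpr ⟨c1, hc1D, ?_⟩
        · exact (Finset.filter_subset _ _).trans (Finset.erase_subset _ _)
        · rw [hD2]
          intro h
          exact (Finset.mem_erase.mp (Finset.mem_filter.mp h).1).1 rfl
      have hD1D : ∀ c ∈ D1, c ∈ D := fun c hc =>
        Finset.mem_of_mem_erase (Finset.mem_of_mem_filter c hc)
      have hD2D : ∀ c ∈ D2, c ∈ D := fun c hc =>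
        Finset.mem_of_mem_erase (Finset.mem_of_mem_filter c hc)
      have hD2disj : ∀ c ∈ D2, c ∩ c1 = ∅ := by
        intro c hc
        have hcD := hD2D c hc
        rw [hD2, Finset.mem_filter, Finset.mem_erase] at hc
        obtain ⟨⟨hne1, -⟩, hnsub⟩ := hc
        by_contra hns
        rcases hlam c hcD c1 hc1D (Finset.nonempty_iff_ne_empty.mpr hns) with h | h
        · exact hnsub h
        · exact hne1 (Finset.eq_of_subset_of_card_le h (hc1max c hcD)).symm
      have hc1X : c1 ⊆ X := hsub c1 hc1D
      -- E1 inside c1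
      have hE1 : ∃ E1 ⊆ c1, E1.Nonempty ∧ 2 * E1.card ≤ c1.card ∧
          ∀ c ∈ D1, (E1 ∩ c).Nonempty ∧ 2 * (E1 ∩ c).card ≤ c.card := by
        rcases D1.eq_empty_or_nonempty with h1e | h1ne
        · obtain ⟨x, hx⟩ := Finset.card_pos.mp (show 0 < c1.card by have := hbig c1 hc1D; omega)
          exact ⟨{x}, Finset.singleton_subset_iff.mpr hx, Finset.singleton_nonempty x,
            by have := hbig c1 hc1D; simp; omega, by rw [h1e]; simp⟩
        · obtain ⟨E1, hsub1, hcard1, hall1⟩ := IH D1 hD1ss c1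
            (fun a ha b hb => hlam a (hD1D a ha) b (hD1D b hb))
            (fun c hc => (Finset.mem_filter.mp hc).2)
            (fun c hc => hbig c (hD1D c hc))
          obtain ⟨c', hc'⟩ := h1ne
          have : (E1 ∩ c').Nonempty := (hall1 c' hc').1
          exact ⟨E1, hsub1, this.mono (Finset.inter_subset_left), hcard1, hall1⟩
      obtain ⟨E1, hE1sub, hE1ne, hE1card, hE1all⟩ := hE1
      obtain ⟨E2, hE2sub, hE2card, hE2all⟩ := IH D2 hD2ss (X \ c1)
        (fun a ha b hb => hlam a (hD2D a ha) b (hD2D b hb))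
        (fun c hc => by
          intro x hx
          rw [Finset.mem_sdiff]
          refine ⟨hsub c (hD2D c hc) hx, ?_⟩
          intro hx1
          have h0 := hD2disj c hc
          have : x ∈ c ∩ c1 := Finset.mem_inter.mpr ⟨hx, hx1⟩
          simp_all)
        (fun c hc => hbig c (hD2D c hc))
      have hE2c1 : E2 ∩ c1 = ∅ := by
        rw [← Finset.disjoint_iff_inter_eq_empty, Finset.disjoint_left]
        intro x hx
        exact (Finset.mem_sdiff.mp (hE2sub hx)).2
      have hdisj : Disjoint E1 E2 := by
        apply Finset.disjoint_left.mpr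
        intro x hx1 hx2
        exact (Finset.mem_sdiff.mp (hE2sub hx2)).2 (hE1sub hx1)
      have hXd : (X \ c1).card = X.card - c1.card := Finset.card_sdiff_of_subset hc1X
      have hc1Xcard : c1.card ≤ X.card := Finset.card_le_card hc1X
      refine ⟨E1 ∪ E2, Finset.union_subset (hE1sub.trans hc1X) (hE2sub.trans Finset.sdiff_subset),
        ?_, ?_⟩
      · rw [Finset.card_union_of_disjoint hdisj]; omega
      · intro c hcD
        rw [Finset.union_inter_distrib_right]
        by_cases hcc : c = c1
        · subst hcc
          have e1 : E1 ∩ c = E1 := Finset.inter_eq_left.mpr hE1sub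
          rw [e1, hE2c1, Finset.union_empty]
          exact ⟨hE1ne, hE1card⟩
        · have hcer : c ∈ D.erase c1 := Finset.mem_erase.mpr ⟨hcc, hcD⟩
          by_cases hsc : c ⊆ c1
          · have hcD1 : c ∈ D1 := Finset.mem_filter.mpr ⟨hcer, hsc⟩
            have e2 : E2 ∩ c = ∅ := by
              rw [← Finset.disjoint_iff_inter_eq_empty, Finset.disjoint_left]
              intro x hx hxc
              have : x ∈ E2 ∩ c1 := Finset.mem_inter.mpr ⟨hx, hsc hxc⟩
              simp [hE2c1] at this
            rw [e2, Finset.union_empty]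
            exact hE1all c hcD1
          · have hcD2 : c ∈ D2 := Finset.mem_filter.mpr ⟨hcer, hsc⟩
            have e3 : E1 ∩ c = ∅ := by
              rw [← Finset.disjoint_iff_inter_eq_empty, Finset.disjoint_left]
              intro x hx hxc
              have : x ∈ c ∩ c1 := Finset.mem_inter.mpr ⟨hxc, hE1sub hx⟩
              simp [hD2disj c hcD2] at this
            rw [e3, Finset.empty_union]
            exact hE2all c hcD2

end Helpers

/-- In any two-resource RSG, for every laminar coalition structure `C` there exists a
`C`-stable allocation: a laminar equilibrium always exists with two resources. -/
theorem two_resource_laminar_equilibrium_exists [Fintype N] [DecidableEq N]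
    (f : Fin 2 → ℕ → ℕ) (hmono : ∀ i, StrictMono (f i)) (hzero : ∀ i, f i 0 = 0)
    (C : Set (Finset N)) (hCne : ∀ c ∈ C, c.Nonempty)
    (hlam : ∀ c1 ∈ C, ∀ c2 ∈ C, (c1 ∩ c2).Nonempty → c1 ⊆ c2 ∨ c2 ⊆ c1) :
    ∃ a : N → Fin 2, ∀ c ∈ C, cStable f a c := by
  classical
  set n := Fintype.card N with hn
  have main : ∀ S : Finset N,
      f 1 (n - S.card) ≤ f 0 (S.card + 1) →
      f 0 S.card ≤ f 1 (n - S.card + 1) →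
      (∀ c ∈ C, f 0 (S.card + 1) = f 1 (n - S.card) →
        ¬ ((c ∩ S).card + 1 ≤ (c \ S).card ∧
          (1 ≤ (c ∩ S).card → f 1 (n - S.card - 1) ≤ f 0 S.card) ∧
          ((c ∩ S).card + 2 ≤ (c \ S).card ∨
            (1 ≤ (c ∩ S).card ∧ f 1 (n - S.card - 1) < f 0 S.card)))) →
      (∀ c ∈ C, f 0 S.card = f 1 (n - S.card + 1) →
        ¬ ((c \ S).card + 1 ≤ (c ∩ S).card ∧
          (1 ≤ (c \ S).card → f 0 (S.card - 1) ≤ f 1 (n - S.card)) ∧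
          ((c \ S).card + 2 ≤ (c ∩ S).card ∨
            (1 ≤ (c \ S).card ∧ f 0 (S.card - 1) < f 1 (n - S.card))))) →
      ∃ a : N → Fin 2, ∀ c ∈ C, cStable f a c := by
    intro S Hu Hd SU SD
    refine ⟨fun j => if j ∈ S then 0 else 1, fun c hc => ?_⟩
    exact master hmono _ c hn (load_alloc S).symm
      (by rw [filter0_alloc]) (by rw [filter1_alloc])
      Hu Hd (SU c hc) (SD c hc)
  -- the threshold k0
  set K := (Finset.range (n + 1)).filter (fun k => f 0 k ≤ f 1 (n + 1 - k)) with hK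
  have h0K : 0 ∈ K := by
    rw [hK, Finset.mem_filter, Finset.mem_range]
    exact ⟨by omega, by rw [hzero 0]; exact Nat.zero_le _⟩
  set k0 := K.max' ⟨0, h0K⟩ with hk0
  have hk0K : k0 ∈ K := K.max'_mem _
  have hk0n : k0 ≤ n := by
    rw [hK, Finset.mem_filter, Finset.mem_range] at hk0K
    omega
  have hk0le : f 0 k0 ≤ f 1 (n - k0 + 1) := by
    rw [hK, Finset.mem_filter, Finset.mem_range] at hk0K
    have : n + 1 - k0 = n - k0 + 1 := by omega
    rw [← this]
    exact hk0K.2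
  have hk0max : ∀ k, k0 < k → k ≤ n → f 1 (n - k + 1) < f 0 k := by
    intro k h1 h2
    by_contra h
    push_neg at h
    have hmem : k ∈ K := by
      rw [hK, Finset.mem_filter, Finset.mem_range]
      refine ⟨by omega, ?_⟩
      have : n + 1 - k = n - k + 1 := by omega
      rw [this]
      exact h
    have := K.le_max' k hmem
    omega
  have Hu0 : f 1 (n - k0) ≤ f 0 (k0 + 1) := by
    rcases eq_or_lt_of_le hk0n with heqn | h
    · rw [heqn, Nat.sub_self, hzero 1]
      exact Nat.zero_le _
    · have := hk0max (k0 + 1) (by omega) (by omega)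
      have e : n - (k0 + 1) + 1 = n - k0 := by omega
      rw [e] at this
      exact this.le
  have HuNE : f 0 (k0 + 1) ≠ f 1 (n - k0) := by
    rcases eq_or_lt_of_le hk0n with heqn | h
    · rw [heqn, Nat.sub_self, hzero 1]
      have : f 0 0 < f 0 (n + 1) := hmono 0 (by omega)
      rw [hzero 0] at this
      omega
    · have := hk0max (k0 + 1) (by omega) (by omega)
      have e : n - (k0 + 1) + 1 = n - k0 := by omega
      rw [e] at this
      omega
  -- finite version of C
  set D := (Set.toFinite C).toFinset with hD
  have hmemD : ∀ c, c ∈ D ↔ c ∈ C := fun c => Set.Finite.mem_toFinset _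
  have hlamD : ∀ c1 ∈ D, ∀ c2 ∈ D, (c1 ∩ c2).Nonempty → c1 ⊆ c2 ∨ c2 ⊆ c1 := by
    intro c1 h1 c2 h2
    exact hlam c1 ((hmemD c1).mp h1) c2 ((hmemD c2).mp h2)
  have hunivcard : (Finset.univ : Finset N).card = n := by rw [Finset.card_univ]
  rcases lt_or_eq_of_le hk0le with hA | hB
  · -- Case A: no tight equality at k0
    obtain ⟨S, hSsub, hScard⟩ := Finset.exists_subset_card_eq
      (show k0 ≤ (Finset.univ : Finset N).card by omega)
    apply main S
    · rw [hScard]; exact Hu0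
    · rw [hScard]; exact hA.le
    · intro c hc heq; rw [hScard] at heq; exact absurd heq HuNE
    · intro c hc heq; rw [hScard] at heq; exact absurd heq (ne_of_lt hA)
  · -- Case B: f 0 k0 = f 1 (n - k0 + 1)
    have hk01 : 1 ≤ k0 := by
      by_contra h
      have hk00 : k0 = 0 := by omega
      rw [hk00, hzero 0] at hB
      have : f 1 0 < f 1 (n - 0 + 1) := hmono 1 (by omega)
      rw [hzero 1] at this
      omega
    set DF := D.filter (fun c => 2 ≤ c.card) with hDF
    obtain ⟨E, hEsub, hEcard, hEall⟩ := Hlem DF Finset.univ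
      (fun a ha b hb => hlamD a (Finset.mem_of_mem_filter a ha) b (Finset.mem_of_mem_filter b hb))
      (fun c _ => Finset.subset_univ c)
      (fun c hc => (Finset.mem_filter.mp hc).2)
    have hEb : ∀ c ∈ C, 2 ≤ c.card → (E ∩ c).Nonempty ∧ 2 * (E ∩ c).card ≤ c.card := by
      intro c hc h2
      exact hEall c (Finset.mem_filter.mpr ⟨(hmemD c).mpr hc, h2⟩)
    rw [hunivcard] at hEcard
    have hmono0 : f 0 (k0 - 1) < f 0 k0 := hmono 0 (by omega)
    have hmono1 : f 1 (n - k0 + 1) ≤ f 1 (n - k0 + 2) := (hmono 1).monotone (by omega)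
    rcases lt_trichotomy (f 0 (k0 - 1)) (f 1 (n - k0)) with hB1 | hB2 | hB3
    · -- Case B1
      by_cases hcE : k0 ≤ E.card
      · obtain ⟨S, hSsub, hScard⟩ := Finset.exists_subset_card_eq hcE
        apply main S
        · rw [hScard]; exact Hu0
        · rw [hScard]; exact hB.le
        · intro c hc heq; rw [hScard] at heq; exact absurd heq HuNE
        · intro c hc heq
          rw [hScard]
          rintro ⟨h1, h2, h3⟩
          have hst : (c ∩ S).card + (c \ S).card = c.card := Finset.card_inter_add_card_sdiff c S
          by_cases hbig : 2 ≤ c.card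
          · have hb := (hEb c hc hbig).2
            have hsE : (c ∩ S).card ≤ (E ∩ c).card := Finset.card_le_card (fun x hx =>
              Finset.mem_inter.mpr ⟨hSsub (Finset.mem_inter.mp hx).2, (Finset.mem_inter.mp hx).1⟩)
            omega
          · omega
      · obtain ⟨S, hES, hSsub, hScard⟩ := Finset.exists_subsuperset_card_eq
          (Finset.subset_univ E) (show E.card ≤ k0 - 1 by omega) (by omega)
        apply main S
        · rw [hScard, show n - (k0 - 1) = n - k0 + 1 from by omega,
            show k0 - 1 + 1 = k0 from by omega]
          exact hB.ge
        · rw [hScard, show n - (k0 - 1) + 1 = n - k0 + 2 from by omega]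
          have : f 1 (n - k0) ≤ f 1 (n - k0 + 2) := (hmono 1).monotone (by omega)
          omega
        · intro c hc heq
          rw [hScard, show n - (k0 - 1) - 1 = n - k0 from by omega]
          rintro ⟨h1, h2, h3⟩
          have hst : (c ∩ S).card + (c \ S).card = c.card := Finset.card_inter_add_card_sdiff c S
          by_cases hs0 : 1 ≤ (c ∩ S).card
          · have := h2 hs0; omega
          · have hbig : 2 ≤ c.card := by omega
            obtain ⟨x, hx⟩ := (hEb c hc hbig).1
            have hxm : x ∈ c ∩ S := Finset.mem_inter.mpr
              ⟨(Finset.mem_inter.mp hx).2, hES (Finset.mem_inter.mp hx).1⟩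
            have : 0 < (c ∩ S).card := Finset.card_pos.mpr ⟨x, hxm⟩
            omega
        · intro c hc heq
          rw [hScard, show n - (k0 - 1) + 1 = n - k0 + 2 from by omega] at heq
          exfalso
          have : f 1 (n - k0) ≤ f 1 (n - k0 + 2) := (hmono 1).monotone (by omega)
          omega
    · -- Case B2
      by_cases hhalf : k0 ≤ (n + 1) / 2
      · obtain ⟨S, hSsub, hScard, hSbal⟩ := Qlem D Finset.univ hlamD
          (fun c _ => Finset.subset_univ c) k0 (by omega)
        apply main S
        · rw [hScard]; exact Hu0
        · rw [hScard]; exact hB.le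
        · intro c hc heq; rw [hScard] at heq; exact absurd heq HuNE
        · intro c hc heq
          rw [hScard]
          rintro ⟨h1, h2, h3⟩
          have hbal := hSbal c ((hmemD c).mpr hc)
          rw [Finset.inter_comm] at hbal
          have hst : (c ∩ S).card + (c \ S).card = c.card := Finset.card_inter_add_card_sdiff c S
          omega
      · obtain ⟨E2, hE2sub, hE2card, hE2bal⟩ := Qlem D Finset.univ hlamD
          (fun c _ => Finset.subset_univ c) (n + 1 - k0) (by omega)
        have hScard : (Finset.univ \ E2).card = k0 - 1 := by
          rw [Finset.card_sdiff_of_subset (Finset.subset_univ E2), hunivcard, hE2card]; omega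
        have hcs : ∀ c : Finset N, c \ (Finset.univ \ E2) = c ∩ E2 := by
          intro c; ext x; simp
        apply main (Finset.univ \ E2)
        · rw [hScard, show n - (k0 - 1) = n - k0 + 1 from by omega,
            show k0 - 1 + 1 = k0 from by omega]
          exact hB.ge
        · rw [hScard, show n - (k0 - 1) + 1 = n - k0 + 2 from by omega]
          omega
        · intro c hc heq
          rw [hScard, show n - (k0 - 1) - 1 = n - k0 from by omega]
          rintro ⟨h1, h2, h3⟩
          have hbal := hE2bal c ((hmemD c).mpr hc)
          rw [Finset.inter_comm] at hbal
          have hst : (c ∩ (Finset.univ \ E2)).card + (c \ (Finset.univ \ E2)).card = c.card :=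
            Finset.card_inter_add_card_sdiff c _
          rw [hcs c] at h1 h3 hst
          omega
        · intro c hc heq
          rw [hScard, show n - (k0 - 1) + 1 = n - k0 + 2 from by omega] at heq
          exfalso
          omega
    · -- Case B3
      by_cases hcE : E.card ≤ n - k0
      · obtain ⟨E', hEE', hE'sub, hE'card⟩ := Finset.exists_subsuperset_card_eq
          (Finset.subset_univ E) hcE (by omega)
        have hScard : (Finset.univ \ E').card = k0 := by
          rw [Finset.card_sdiff_of_subset (Finset.subset_univ E'), hunivcard, hE'card]; omega
        have hcs : ∀ c : Finset N, c \ (Finset.univ \ E') = c ∩ E' := by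
          intro c; ext x; simp
        apply main (Finset.univ \ E')
        · rw [hScard]; exact Hu0
        · rw [hScard]; exact hB.le
        · intro c hc heq; rw [hScard] at heq; exact absurd heq HuNE
        · intro c hc heq
          rw [hScard]
          rintro ⟨h1, h2, h3⟩
          have hst : (c ∩ (Finset.univ \ E')).card + (c \ (Finset.univ \ E')).card = c.card :=
            Finset.card_inter_add_card_sdiff c _
          rw [hcs c] at h1 h2 h3 hst
          by_cases ht1 : 1 ≤ (c ∩ E').card
          · have := h2 ht1; omega
          · have hbig : 2 ≤ c.card := by omega
            obtain ⟨x, hx⟩ := (hEb c hc hbig).1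
            have hxm : x ∈ c ∩ E' := Finset.mem_inter.mpr
              ⟨(Finset.mem_inter.mp hx).2, hEE' (Finset.mem_inter.mp hx).1⟩
            have : 0 < (c ∩ E').card := Finset.card_pos.mpr ⟨x, hxm⟩
            omega
      · obtain ⟨E'', hE''sub, hE''card⟩ := Finset.exists_subset_card_eq
          (show n - k0 + 1 ≤ E.card by omega)
        have hScard : (Finset.univ \ E'').card = k0 - 1 := by
          rw [Finset.card_sdiff_of_subset (Finset.subset_univ E''), hunivcard, hE''card]; omega
        have hcs : ∀ c : Finset N, c \ (Finset.univ \ E'') = c ∩ E'' := by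
          intro c; ext x; simp
        apply main (Finset.univ \ E'')
        · rw [hScard, show n - (k0 - 1) = n - k0 + 1 from by omega,
            show k0 - 1 + 1 = k0 from by omega]
          exact hB.ge
        · rw [hScard, show n - (k0 - 1) + 1 = n - k0 + 2 from by omega]
          omega
        · intro c hc heq
          rw [hScard, show n - (k0 - 1) - 1 = n - k0 from by omega]
          rintro ⟨h1, h2, h3⟩
          have hst : (c ∩ (Finset.univ \ E'')).card + (c \ (Finset.univ \ E'')).card = c.card :=
            Finset.card_inter_add_card_sdiff c _
          rw [hcs c] at h1 h3 hst
          by_cases hbig : 2 ≤ c.card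
          · have hb := (hEb c hc hbig).2
            have htE : (c ∩ E'').card ≤ (E ∩ c).card := Finset.card_le_card (fun x hx =>
              Finset.mem_inter.mpr ⟨hE''sub (Finset.mem_inter.mp hx).2, (Finset.mem_inter.mp hx).1⟩)
            omega
          · omega
        · intro c hc heq
          rw [hScard, show n - (k0 - 1) + 1 = n - k0 + 2 from by omega] at heq
          exfalso
          omega
end

section
/- Consider the RSG with N = {1,...,5}, two identical resources with cost f(q) = q, and coalition structure C consisting of all singletons together with {1,2},{3,4},{4,5},{1,2,3,5},{2,3,4,5}. Then no allocation is C-stable; hence a centralized equilibrium need not exist even with two identical resources. -/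
variable {N M : Type*}

/-- Non-existence of centralized equilibrium with two identical resources: in the RSG with
five agents and two identical resources of cost `f(q) = q`, for the (centralized) coalition
structure consisting of the singletons together with `{1,2},{3,4},{4,5},{1,2,3,5},{2,3,4,5}`
(agents renamed `0,…,4`), no allocation is `C`-stable. -/
theorem no_centralized_equilibrium_two_identical
    (C : Set (Finset (Fin 5)))
    (hC : C = {c : Finset (Fin 5) | ∃ j : Fin 5, c = {j}} ∪
      {{0, 1}, {2, 3}, {3, 4}, {0, 1, 2, 4}, {1, 2, 3, 4}}) :
    ∀ a : Fin 5 → Fin 2, ∃ c ∈ C, ¬ cStable (fun _ q => q) a c := by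
  subst hC
  intro a
  have : ∃ c : Finset (Fin 5), ((∃ j : Fin 5, c = {j}) ∨ c ∈ ({{0, 1}, {2, 3}, {3, 4}, {0, 1, 2, 4}, {1, 2, 3, 4}} : Finset (Finset (Fin 5)))) ∧ ¬ cStable (fun _ q => q) a c := by
    revert a; unfold cStable cost load; decide
  obtain ⟨c, h1, h2⟩ := this
  refine ⟨c, ?_, h2⟩
  rcases h1 with h | h
  · exact Or.inl h
  · right; simpa using h
end

section
/- In an RSG with exactly one type 1 resource and one type 2 resource (two resources total), the Nash equilibrium allocation with |a_1| = q_1 and |a_2| = q_2 is a super strong equilibrium: no nonempty coalition of agents has a Pareto-improving deviation. -/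
variable {N M : Type*}

/-- In a two-resource RSG with exactly one type-1 resource and one type-2 resource, the
Nash equilibrium allocation filling both resources to their quotas is a super strong
equilibrium: no nonempty coalition has a Pareto-improving deviation. -/
theorem one_type1_one_type2_super_strong [Fintype N] [DecidableEq N]
    (f : Fin 2 → ℕ → ℕ) (hmono : ∀ i, StrictMono (f i)) (hzero : ∀ i, f i 0 = 0)
    (htype1 : f 0 (quota f (minmax N f) 0) = minmax N f)
    (htype2 : f 1 (quota f (minmax N f) 1) < minmax N f)
    (hn : Fintype.card N = quota f (minmax N f) 0 + quota f (minmax N f) 1)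
    (a : N → Fin 2)
    (h0 : load a 0 = quota f (minmax N f) 0)
    (h1 : load a 1 = quota f (minmax N f) 1) :
    ∀ c : Finset N, c.Nonempty → cStable f a c := by
  classical
  intro c hc
  rintro ⟨b, hout, hweak, j0, hj0c, hj0⟩
  set α := minmax N f with hα
  set q0 := quota f α 0 with hq0def
  set q1 := quota f α 1 with hq1def
  have fin2 : ∀ x : Fin 2, x = 0 ∨ x = 1 := by decide
  -- sum of loads equals card N
  have hsum : ∀ g : N → Fin 2, load g 0 + load g 1 = Fintype.card N := by
    intro g
    have h2 : load g 1 = (Finset.univ.filter (fun j => ¬ g j = 0)).card := by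
      unfold load
      congr 1
      apply Finset.filter_congr
      intro j _
      rcases fin2 (g j) with h | h <;> simp [h]
    rw [h2]
    exact Finset.card_filter_add_card_filter_not (fun j => g j = 0)
  -- quota 1 property : f 1 (q1 + 1) > α
  have hle : ∀ i : Fin 2, ∀ t, t ≤ f i t := by
    intro i t
    exact (hmono i).le_apply
  have hbdd : BddAbove {t | f 1 t ≤ α} := by
    refine ⟨α, fun t ht => le_trans (hle 1 t) ht⟩
  have hq1succ : α < f 1 (q1 + 1) := by
    by_contra h
    push_neg at h
    have : q1 + 1 ≤ q1 := le_csSup hbdd h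
    omega
  -- old costs
  have hca : ∀ j, cost f a j ≤ α := by
    intro j
    rcases fin2 (a j) with h | h <;> unfold cost <;> rw [h]
    · rw [h0, htype1]
    · rw [h1]; exact le_of_lt htype2
  have hca1 : ∀ j, a j = 1 → cost f a j = f 1 q1 := by
    intro j h
    unfold cost
    rw [h, h1]
  -- Claim A: load b 0 ≤ q0
  have hA : load b 0 ≤ q0 := by
    by_contra h
    push_neg at h
    have hex : ∃ j ∈ c, b j = 0 := by
      by_contra hno
      push_neg at hno
      have hsub : Finset.univ.filter (fun j => b j = 0) ⊆
          Finset.univ.filter (fun j => a j = 0) := by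
        intro j hj
        simp only [Finset.mem_filter, Finset.mem_univ, true_and] at hj ⊢
        have hjc : j ∉ c := fun hjc => hno j hjc hj
        rw [← hout j hjc]; exact hj
      have := Finset.card_le_card hsub
      have : load b 0 ≤ load a 0 := this
      omega
    obtain ⟨j, hjc, hjb⟩ := hex
    have hcostb : cost f b j = f 0 (load b 0) := by unfold cost; rw [hjb]
    have h1' : α < f 0 (load b 0) := by
      calc α = f 0 q0 := htype1.symm
      _ < f 0 (load b 0) := hmono 0 (by omega)
    have := hweak j hjc
    have := hca j
    omega
  -- Claim B: load b 1 ≤ q1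
  have hB : load b 1 ≤ q1 := by
    by_contra h
    push_neg at h
    have hex : ∃ j ∈ c, b j = 1 := by
      by_contra hno
      push_neg at hno
      have hsub : Finset.univ.filter (fun j => b j = 1) ⊆
          Finset.univ.filter (fun j => a j = 1) := by
        intro j hj
        simp only [Finset.mem_filter, Finset.mem_univ, true_and] at hj ⊢
        have hjc : j ∉ c := fun hjc => hno j hjc hj
        rw [← hout j hjc]; exact hj
      have := Finset.card_le_card hsub
      have : load b 1 ≤ load a 1 := this
      omega
    obtain ⟨j, hjc, hjb⟩ := hex
    have hcostb : cost f b j = f 1 (load b 1) := by unfold cost; rw [hjb]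
    have h1' : α < f 1 (load b 1) := by
      calc α < f 1 (q1 + 1) := hq1succ
      _ ≤ f 1 (load b 1) := (hmono 1).monotone (by omega)
    have := hweak j hjc
    have := hca j
    omega
  -- so loads are equal
  have hsb := hsum b
  have hEq0 : load b 0 = q0 := by omega
  have hEq1 : load b 1 = q1 := by omega
  -- Claim C: no agent moves from 1 to 0
  have hC : ∀ j, a j = 1 → b j ≠ 0 := by
    intro j ha1 hb0
    have hjc : j ∈ c := by
      by_contra hjc
      rw [hout j hjc, ha1] at hb0
      exact absurd hb0 (by decide)
    have hcostb : cost f b j = α := by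
      unfold cost; rw [hb0, hEq0, htype1]
    have := hweak j hjc
    rw [hcostb, hca1 j ha1] at this
    omega
  -- hence filter b=0 ⊆ filter a=0 with equal cards, so b = a
  have hsub : Finset.univ.filter (fun j => b j = 0) ⊆
      Finset.univ.filter (fun j => a j = 0) := by
    intro j hj
    simp only [Finset.mem_filter, Finset.mem_univ, true_and] at hj ⊢
    rcases fin2 (a j) with h | h
    · exact h
    · exact absurd hj (hC j h)
  have hseq : Finset.univ.filter (fun j => b j = 0) =
      Finset.univ.filter (fun j => a j = 0) :=
    Finset.eq_of_subset_of_card_le hsub (by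
      change load a 0 ≤ load b 0
      omega)
  have hba : ∀ j, b j = a j := by
    intro j
    have hiff : b j = 0 ↔ a j = 0 := by
      constructor <;> intro h
      · have : j ∈ Finset.univ.filter (fun j => a j = 0) := by
          rw [← hseq]; simp [h]
        simpa using this
      · have : j ∈ Finset.univ.filter (fun j => b j = 0) := by
          rw [hseq]; simp [h]
        simpa using this
    rcases fin2 (b j) with h | h <;> rcases fin2 (a j) with h' | h' <;>
      simp_all
  have : cost f b j0 = cost f a j0 := by
    have : b = a := funext hba
    rw [this]
  omega
end
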